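/- arXiv:math/0406171 — 2 statements merged into one kernel-verified Lean document; each statement's English description precedes it below -/
import Mathlib

section
/- Let ρ = C(σ) × {0} + C(τ × {1}) be a relevant cone of a good subdivision Σ̃' of Σ̃, with (m_i, l_i) ∈ M × ℤ defining φ̃_i on ρ, and V_ρ = Span{(m_i, l_i - 1) | 1 ≤ i ≤ r} ⊆ M_ℝ × ℝ. Then ρ ∩ V_ρ^⊥ = C((σ̌(σ) + τ) × {1}), where σ̌(σ) = β₁*(σ) + ⋯ + β_r*(σ) with β_i*(σ) = {n ∈ σ | φ_i(n) = 1}. -/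
/-!
On the boundary of `Δ*` the support functions `φᵢ = supp Δᵢ` sum to `supp Δ = 1`, and they
are nonnegative: writing a boundary point as a convex combination of vertices of `Δ*`, where
the `φᵢ` take the values `0` and `1`, Jensen's inequality for each convex `φᵢ` is an equality
after summing over `i`, hence for every `i`. On `σ` each `φᵢ` is the linear form `mᵢ`, so at a
lattice vertex of `σ` exactly one `φᵢ` equals `1` and the others vanish. Consequently
`σ̌(σ) = r • {x ∈ σ | φᵢ x = 1/r for all i}`. Finally `a • (x, 0) + b • (t, 1) ∈ ρ` is
orthogonal to every `(mᵢ, lᵢ - 1)` iff `a φᵢ(x) = b` for all `i`, which forces `a = r b` and,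
unless the point is `0`, `φᵢ(x) = 1/r`.
-/

open scoped Pointwise

namespace BB

abbrev V (n : ℕ) : Type := Fin n → ℝ

/-- The standard pairing between `M_ℝ` and `N_ℝ` (both identified with `ℝⁿ`). -/
def pair {n : ℕ} (m v : V n) : ℝ := ∑ i, m i * v i

/-- A point of `ℝⁿ` is a lattice point if all its coordinates are integers. -/
def IsLatticePt {n : ℕ} (m : V n) : Prop := ∀ i, ∃ z : ℤ, m i = (z : ℝ)

/-- A lattice polytope: convex hull of finitely many lattice points. -/
def IsLatticePolytope {n : ℕ} (P : Set (V n)) : Prop :=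
  ∃ S : Finset (V n), (∀ m ∈ S, IsLatticePt m) ∧ P = convexHull ℝ (S : Set (V n))

/-- The polar dual `P* = {v | ⟨m,v⟩ ≥ -1 for all m ∈ P}`. -/
def polar {n : ℕ} (P : Set (V n)) : Set (V n) := {v | ∀ m ∈ P, -1 ≤ pair m v}

/-- A reflexive polytope: a lattice polytope with `0` in its interior whose polar
dual is again a lattice polytope. -/
def IsReflexive {n : ℕ} (P : Set (V n)) : Prop :=
  IsLatticePolytope P ∧ (0 : V n) ∈ interior P ∧ IsLatticePolytope (polar P)

/-- The support function `supp P v = -inf{⟨m,v⟩ | m ∈ P}`; for `P = Δᵢ` and `v ∈ N_ℝ`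
this is the piecewise linear function `φᵢ(v)` of the nef-partition. -/
noncomputable def supp {n : ℕ} (P : Set (V n)) (v : V n) : ℝ :=
  sSup ((fun m => -(pair m v)) '' P)

end BB


namespace BB

/-- The pairing on `(M_ℝ ⊕ ℝ) × (N_ℝ ⊕ ℝ)`. -/
def pairP {n : ℕ} (p q : V n × ℝ) : ℝ := pair p.1 q.1 + p.2 * q.2

/-- The cone over a set, with vertex the origin: `C(S) = {c•s | c ≥ 0, s ∈ S}`. -/
def cone0 {E : Type*} [AddCommMonoid E] [Module ℝ E] (S : Set E) : Set E :=
  {x | ∃ c : ℝ, 0 ≤ c ∧ ∃ s ∈ S, x = c • s}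

/-- `F` is a face of the convex set `P` (an exposed subset). -/
def IsFaceOf {E : Type*} [TopologicalSpace E] [AddCommMonoid E] [Module ℝ E]
    (F P : Set E) : Prop := IsExposed ℝ P F


theorem frontier_eq_empty_of_subsingleton {X : Type*} [TopologicalSpace X] [Subsingleton X]
    (s : Set X) : frontier s = ∅ :=
  Subsingleton.set_cases (p := fun s => frontier s = ∅) frontier_empty frontier_univ s

section ConvexGeometry

variable {E : Type*} [AddCommGroup E] [Module ℝ E] [TopologicalSpace E]
  [IsTopologicalAddGroup E] [ContinuousSMul ℝ E]

theorem extremePoints_subset_frontier [Nontrivial E] (S : Set E) :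
    S.extremePoints ℝ ⊆ frontier S := fun _ hx =>
  ⟨subset_closure (extremePoints_subset hx),
    fun hint => Set.disjoint_left.1 (disjoint_interior_extremePoints S) hint hx⟩

theorem eq_convexHull_of_extremePoints_eq [T2Space E] [LocallyConvexSpace ℝ E] {K : Set E}
    {F : Finset E} (hK : IsCompact K) (hKc : Convex ℝ K) (hF : (F : Set E) = K.extremePoints ℝ) :
    K = convexHull ℝ (F : Set E) := by
  rw [← closure_convexHull_extremePoints hK hKc, ← hF,
    (F.finite_toSet.isClosed_convexHull ℝ).closure_eq]

end ConvexGeometry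

section Pairing

variable {n : ℕ}

theorem pair_add_left (m m' v : V n) : pair (m + m') v = pair m v + pair m' v :=
  add_dotProduct m m' v

theorem pair_add_right (m v v' : V n) : pair m (v + v') = pair m v + pair m v' :=
  dotProduct_add m v v'

theorem pair_smul_right (m : V n) (c : ℝ) (v : V n) : pair m (c • v) = c * pair m v :=
  dotProduct_smul c m v

theorem pair_sum_left {ι : Type*} (s : Finset ι) (m : ι → V n) (v : V n) :
    pair (∑ i ∈ s, m i) v = ∑ i ∈ s, pair (m i) v :=
  sum_dotProduct s m v

theorem pair_sum_right {ι : Type*} (s : Finset ι) (m : V n) (v : ι → V n) :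
    pair m (∑ i ∈ s, v i) = ∑ i ∈ s, pair m (v i) :=
  dotProduct_sum m s v

theorem isLinearMap_pair (m : V n) : IsLinearMap ℝ (pair m) :=
  ⟨dotProduct_add m, fun c v => dotProduct_smul c m v⟩

theorem continuous_neg_pair : Continuous fun p : V n × V n => -(pair p.2 p.1) := by
  simp only [pair]
  fun_prop

theorem IsLatticePt.exists_pair_eq_intCast {m v : V n} (hm : IsLatticePt m)
    (hv : IsLatticePt v) : ∃ z : ℤ, pair m v = z := by
  choose a ha using hm
  choose b hb using hv
  exact ⟨∑ i, a i * b i, by simp [pair, ha, hb]⟩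

theorem IsLatticePolytope.isCompact {P : Set (V n)} (hP : IsLatticePolytope P) :
    IsCompact P := by
  obtain ⟨S, -, rfl⟩ := hP
  exact S.finite_toSet.isCompact_convexHull (𝕜 := ℝ)

theorem IsLatticePolytope.convex {P : Set (V n)} (hP : IsLatticePolytope P) : Convex ℝ P := by
  obtain ⟨S, -, rfl⟩ := hP
  exact convex_convexHull ℝ _

end Pairing

section SupportFunction

variable {n : ℕ} {P Q : Set (V n)}

theorem bddAbove_image_neg_pair (hP : IsCompact P) (v : V n) :
    BddAbove ((fun m => -(pair m v)) '' P) :=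
  (hP.image (continuous_neg_pair.comp (Continuous.prodMk_right v))).bddAbove

theorem neg_pair_le_supp (hP : IsCompact P) {m : V n} (hm : m ∈ P) (v : V n) :
    -(pair m v) ≤ supp P v :=
  le_csSup (bddAbove_image_neg_pair hP v) ⟨m, hm, rfl⟩

theorem supp_le_iff (hP : IsCompact P) (hne : P.Nonempty) {v : V n} {c : ℝ} :
    supp P v ≤ c ↔ ∀ m ∈ P, -(pair m v) ≤ c := by
  rw [supp, csSup_le_iff (bddAbove_image_neg_pair hP v) (hne.image _), Set.forall_mem_image]

theorem continuous_supp (hP : IsCompact P) : Continuous (supp P) :=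
  hP.continuous_sSup (f := fun v m => -(pair m v)) continuous_neg_pair

theorem convexOn_supp (hP : IsCompact P) (hne : P.Nonempty) : ConvexOn ℝ Set.univ (supp P) := by
  refine ⟨convex_univ, fun x _ y _ a b ha hb _ => (supp_le_iff hP hne).2 fun m hm => ?_⟩
  have hlin : -(pair m (a • x + b • y)) = a * -(pair m x) + b * -(pair m y) := by
    rw [pair_add_right, pair_smul_right, pair_smul_right]
    ring
  rw [hlin, smul_eq_mul, smul_eq_mul]
  gcongr <;> exact neg_pair_le_supp hP hm _

theorem supp_add (hP : IsCompact P) (hPne : P.Nonempty) (hQ : IsCompact Q) (hQne : Q.Nonempty)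
    (v : V n) : supp (P + Q) v = supp P v + supp Q v := by
  have himage : (fun m => -(pair m v)) '' (P + Q)
      = (fun m => -(pair m v)) '' P + (fun m => -(pair m v)) '' Q :=
    Set.image_image2_distrib fun a b => by
      rw [pair_add_left]
      ring
  rw [supp, himage, csSup_add (hPne.image _) (bddAbove_image_neg_pair hP v) (hQne.image _)
    (bddAbove_image_neg_pair hQ v)]
  rfl

theorem isCompact_finsetSum {ι : Type*} (s : Finset ι) {P : ι → Set (V n)}
    (hP : ∀ i, IsCompact (P i)) : IsCompact (∑ i ∈ s, P i) := by
  classical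
  induction s using Finset.induction_on with
  | empty => exact isCompact_singleton (x := (0 : V n))
  | insert i s hi ih => rw [Finset.sum_insert hi]; exact (hP i).add ih

theorem nonempty_finsetSum {ι : Type*} (s : Finset ι) {P : ι → Set (V n)}
    (hne : ∀ i, (P i).Nonempty) : (∑ i ∈ s, P i).Nonempty :=
  ⟨_, Set.finsetSum_mem_finsetSum s P (fun i => (hne i).some) fun i _ => (hne i).some_mem⟩

theorem supp_finsetSum {ι : Type*} (s : Finset ι) {P : ι → Set (V n)}
    (hP : ∀ i, IsCompact (P i)) (hne : ∀ i, (P i).Nonempty) (v : V n) :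
    supp (∑ i ∈ s, P i) v = ∑ i ∈ s, supp (P i) v := by
  classical
  induction s using Finset.induction_on with
  | empty => simp [supp, pair]
  | insert i s hi ih =>
    rw [Finset.sum_insert hi, Finset.sum_insert hi,
      supp_add (hP i) (hne i) (isCompact_finsetSum s hP) (nonempty_finsetSum s hne), ih]

theorem polar_eq_setOf_supp_le (hP : IsCompact P) (hne : P.Nonempty) :
    polar P = {v | supp P v ≤ 1} := by
  ext v
  simp only [polar, Set.mem_ofPred_eq, supp_le_iff hP hne, neg_le]

theorem supp_eq_one_of_mem_frontier_polar (hP : IsCompact P) (hne : P.Nonempty) {y : V n}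
    (hy : y ∈ frontier (polar P)) : supp P y = 1 := by
  rw [polar_eq_setOf_supp_le hP hne] at hy
  exact frontier_le_subset_eq (continuous_supp hP) continuous_const hy

end SupportFunction

theorem eq_zero_or_eq_one_of_sum_eq_one {ι : Type*} [Fintype ι] {f : ι → ℝ}
    (hint : ∀ i, ∃ z : ℤ, f i = z) (hnn : ∀ i, 0 ≤ f i) (hsum : ∑ i, f i = 1) (i : ι) :
    f i = 0 ∨ f i = 1 := by
  have hle : f i ≤ 1 := hsum ▸ Finset.single_le_sum (fun j _ => hnn j) (Finset.mem_univ i)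
  have h0 := hnn i
  obtain ⟨z, hz⟩ := hint i
  rw [hz] at hle h0 ⊢
  have hz0 : 0 ≤ z := by exact_mod_cast h0
  have hz1 : z ≤ 1 := by exact_mod_cast hle
  rcases (by omega : z = 0 ∨ z = 1) with rfl | rfl <;> simp

section NefPartition

variable {n r : ℕ} {D : Fin r → Set (V n)}

theorem sum_supp_eq_one_of_mem_frontier_polar (hD : ∀ i, IsCompact (D i))
    (hDne : ∀ i, (D i).Nonempty) {y : V n} (hy : y ∈ frontier (polar (∑ i, D i))) :
    ∑ i, supp (D i) y = 1 := by
  rw [← supp_finsetSum _ hD hDne]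
  exact supp_eq_one_of_mem_frontier_polar (isCompact_finsetSum _ hD) (nonempty_finsetSum _ hDne)
    hy

theorem supp_nonneg_of_mem_frontier_polar (hD : ∀ i, IsCompact (D i))
    (hDne : ∀ i, (D i).Nonempty) {E : Finset (V n)}
    (hPE : polar (∑ i, D i) = convexHull ℝ (E : Set (V n)))
    (hEfr : ∀ e ∈ E, e ∈ frontier (polar (∑ i, D i)))
    (hnef : ∀ i, ∀ e ∈ E, 0 ≤ supp (D i) e) {y : V n} (hy : y ∈ frontier (polar (∑ i, D i)))
    (i : Fin r) : 0 ≤ supp (D i) y := by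
  have hyP : y ∈ polar (∑ i, D i) :=
    (hPE ▸ E.finite_toSet.isClosed_convexHull (𝕜 := ℝ)).frontier_subset hy
  rw [hPE, Finset.mem_convexHull'] at hyP
  obtain ⟨w, hw0, hw1, rfl⟩ := hyP
  have hjensen : ∀ j, supp (D j) (∑ e ∈ E, w e • e) ≤ ∑ e ∈ E, w e * supp (D j) e := fun j =>
    (convexOn_supp (hD j) (hDne j)).map_sum_le hw0 hw1 fun _ _ => Set.mem_univ _
  have hsum : ∑ j, supp (D j) (∑ e ∈ E, w e • e) = ∑ j, ∑ e ∈ E, w e * supp (D j) e := by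
    rw [sum_supp_eq_one_of_mem_frontier_polar hD hDne hy, Finset.sum_comm, ← hw1]
    refine Finset.sum_congr rfl fun e he => ?_
    rw [← Finset.mul_sum, sum_supp_eq_one_of_mem_frontier_polar hD hDne (hEfr e he), mul_one]
  rw [(Finset.sum_eq_sum_iff_of_le fun j _ => hjensen j).1 hsum i (Finset.mem_univ i)]
  exact Finset.sum_nonneg fun e he => mul_nonneg (hw0 e he) (hnef i e he)

theorem IsReflexive.nonempty_summand (h : IsReflexive (∑ i, D i)) (i : Fin r) :
    (D i).Nonempty := by
  obtain ⟨g, hg, -⟩ := (Set.mem_fintype_sum _ _).1 (interior_subset h.2.1)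
  exact ⟨g i, hg i⟩

theorem IsReflexive.pos_of_sum [Nontrivial (V n)] (h : IsReflexive (∑ i, D i)) : 0 < r :=
  Nat.pos_of_ne_zero fun hr => by
    subst hr
    simpa [← Set.singleton_zero, interior_singleton] using h.2.1

theorem supp_eq_zero_or_one_of_mem_frontier_polar [Nontrivial (V n)]
    (hrefl : IsReflexive (∑ i, D i)) (hDlat : ∀ i, IsLatticePolytope (D i)) {E : Finset (V n)}
    (hE : (E : Set (V n)) = (polar (∑ i, D i)).extremePoints ℝ)
    (hnef : ∀ i, ∀ e ∈ E, supp (D i) e = 0 ∨ supp (D i) e = 1) {y : V n}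
    (hy : y ∈ frontier (polar (∑ i, D i))) (hint : ∀ i, ∃ z : ℤ, supp (D i) y = z) :
    (∀ i, supp (D i) y = 0 ∨ supp (D i) y = 1) ∧ ∑ i, supp (D i) y = 1 := by
  have hD : ∀ i, IsCompact (D i) := fun i => (hDlat i).isCompact
  have hsum := sum_supp_eq_one_of_mem_frontier_polar hD hrefl.nonempty_summand hy
  have hnonneg := supp_nonneg_of_mem_frontier_polar hD hrefl.nonempty_summand
    (eq_convexHull_of_extremePoints_eq hrefl.2.2.isCompact hrefl.2.2.convex hE)
    (fun e he => extremePoints_subset_frontier _ (hE ▸ he))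
    (fun i e he => by rcases hnef i e he with h | h <;> simp [h]) hy
  exact ⟨eq_zero_or_eq_one_of_sum_eq_one hint hnonneg hsum, hsum⟩

end NefPartition

section SimplexFaces

variable {n r : ℕ} {S : Finset (V n)} {m : Fin r → V n}

theorem pair_nonneg_of_mem_convexHull (h01 : ∀ v ∈ S, ∀ i, pair (m i) v = 0 ∨ pair (m i) v = 1)
    {x : V n} (hx : x ∈ convexHull ℝ (S : Set (V n))) (i : Fin r) : 0 ≤ pair (m i) x := by
  refine convexHull_min (fun v hv => ?_) (convex_halfSpace_ge (isLinearMap_pair (m i)) 0) hx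
  rcases h01 v hv i with h | h <;> simp [h]

theorem sum_pair_eq_one_of_mem_convexHull (h1 : ∀ v ∈ S, ∑ i, pair (m i) v = 1) {x : V n}
    (hx : x ∈ convexHull ℝ (S : Set (V n))) : ∑ i, pair (m i) x = 1 := by
  have hsub : (S : Set (V n)) ⊆ {w | pair (∑ i, m i) w = 1} := fun v hv => by
    simpa [pair_sum_left] using h1 v hv
  simpa [pair_sum_left] using
    convexHull_min hsub (convex_hyperplane (isLinearMap_pair _) 1) hx

theorem pair_eq_zero_of_pair_eq_one
    (h01 : ∀ v ∈ S, ∀ i, pair (m i) v = 0 ∨ pair (m i) v = 1)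
    (h1 : ∀ v ∈ S, ∑ i, pair (m i) v = 1) {y : V n} (hy : y ∈ convexHull ℝ (S : Set (V n)))
    {i j : Fin r} (hi : pair (m i) y = 1) (hji : j ≠ i) : pair (m j) y = 0 := by
  have hrest : ∑ k ∈ Finset.univ.erase i, pair (m k) y = 0 := by
    have := Finset.add_sum_erase Finset.univ (fun k => pair (m k) y) (Finset.mem_univ i)
    rw [sum_pair_eq_one_of_mem_convexHull h1 hy, hi] at this
    linarith
  exact (Finset.sum_eq_zero_iff_of_nonneg fun k _ => pair_nonneg_of_mem_convexHull h01 hy k).1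
    hrest j (Finset.mem_erase.2 ⟨hji, Finset.mem_univ j⟩)

theorem mem_smul_of_mem_sum_levelSets
    (h01 : ∀ v ∈ S, ∀ i, pair (m i) v = 0 ∨ pair (m i) v = 1)
    (h1 : ∀ v ∈ S, ∑ i, pair (m i) v = 1) (hr : 0 < r) {y : V n}
    (hy : y ∈ ∑ i, {x ∈ convexHull ℝ (S : Set (V n)) | pair (m i) x = 1}) :
    y ∈ (r : ℝ) • {x ∈ convexHull ℝ (S : Set (V n)) | ∀ i, pair (m i) x = (r : ℝ)⁻¹} := by
  obtain ⟨u, hu, rfl⟩ := (Set.mem_fintype_sum _ _).1 hy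
  have hr' : (r : ℝ) ≠ 0 := by positivity
  refine ⟨(r : ℝ)⁻¹ • ∑ i, u i, ⟨?_, fun j => ?_⟩, smul_inv_smul₀ hr' _⟩
  · rw [Finset.smul_sum]
    exact (convex_convexHull ℝ _).sum_mem (fun _ _ => by positivity) (by simp [hr'])
      fun i _ => (hu i).1
  · have hj : pair (m j) (∑ i, u i) = 1 := by
      rw [pair_sum_right, Finset.sum_eq_single j
        (fun i _ hij => pair_eq_zero_of_pair_eq_one h01 h1 (hu i).1 (hu i).2 hij.symm)
        (by simp)]
      exact (hu j).2
    rw [pair_smul_right, hj, mul_one]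

theorem smul_mem_sum_levelSets
    (h01 : ∀ v ∈ S, ∀ i, pair (m i) v = 0 ∨ pair (m i) v = 1)
    (h1 : ∀ v ∈ S, ∑ i, pair (m i) v = 1) {x : V n} (hx : x ∈ convexHull ℝ (S : Set (V n)))
    (hxr : ∀ i, pair (m i) x = (r : ℝ)⁻¹) :
    (r : ℝ) • x ∈ ∑ i, {y ∈ convexHull ℝ (S : Set (V n)) | pair (m i) y = 1} := by
  obtain ⟨w, hw0, hw1, rfl⟩ := Finset.mem_convexHull'.1 hx
  -- The `i`-th summand collects the vertices of `x` lying on the `i`-th face, rescaled by `r`.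
  set c : Fin r → V n → ℝ := fun i v => r * w v * pair (m i) v
  have hpair : ∀ i, pair (m i) (∑ v ∈ S, w v • v) = ∑ v ∈ S, w v * pair (m i) v := fun i => by
    simp only [pair_sum_right, pair_smul_right]
  have hc1 : ∀ i, ∑ v ∈ S, c i v = 1 := fun i => by
    have hr' : (r : ℝ) ≠ 0 := by exact_mod_cast i.pos.ne'
    simp only [c, mul_assoc, ← Finset.mul_sum, ← hpair, hxr, mul_inv_cancel₀ hr']
  refine (Set.mem_fintype_sum _ _).2 ⟨fun i => ∑ v ∈ S, c i v • v, fun i => ⟨?_, ?_⟩, ?_⟩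
  · refine (convex_convexHull ℝ _).sum_mem (fun v hv => ?_) (hc1 i)
      fun v hv => subset_convexHull ℝ _ hv
    exact mul_nonneg (mul_nonneg (Nat.cast_nonneg r) (hw0 v hv))
      (pair_nonneg_of_mem_convexHull h01 (subset_convexHull ℝ _ hv) i)
  · rw [← hc1 i]
    simp only [pair_sum_right, pair_smul_right]
    refine Finset.sum_congr rfl fun v hv => ?_
    rcases h01 v hv i with h | h <;> simp [c, h]
  · rw [Finset.sum_comm, Finset.smul_sum]
    refine Finset.sum_congr rfl fun v hv => ?_
    rw [← Finset.sum_smul, smul_smul]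
    simp only [c, ← Finset.mul_sum, h1 v hv, mul_one]

theorem sum_levelSets_eq_smul
    (h01 : ∀ v ∈ S, ∀ i, pair (m i) v = 0 ∨ pair (m i) v = 1)
    (h1 : ∀ v ∈ S, ∑ i, pair (m i) v = 1) (hr : 0 < r) :
    ∑ i, {x ∈ convexHull ℝ (S : Set (V n)) | pair (m i) x = 1}
      = (r : ℝ) • {x ∈ convexHull ℝ (S : Set (V n)) | ∀ i, pair (m i) x = (r : ℝ)⁻¹} := by
  refine subset_antisymm (fun y hy => mem_smul_of_mem_sum_levelSets h01 h1 hr hy) ?_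
  rintro _ ⟨x, ⟨hx, hxr⟩, rfl⟩
  exact smul_mem_sum_levelSets h01 h1 hx hxr

end SimplexFaces

section Cone

variable {n r : ℕ}

theorem pairP_smul_add_smul (m : V n) (l a b : ℝ) (x t : V n) :
    pairP (m, l - 1) (a • (x, 0) + b • (t, 1)) = a * pair m x + b * (pair m t + l) - b := by
  simp only [pairP, Prod.fst_add, Prod.snd_add, Prod.smul_mk, smul_eq_mul, mul_one,
    pair_add_right, pair_smul_right]
  ring

theorem cone_inter_perp_eq (hr : 0 < r) {σ τ : Set (V n)} {m : Fin r → V n} {l : Fin r → ℝ}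
    (hσ : ∀ x ∈ σ, ∑ i, pair (m i) x = 1)
    (hL : {x ∈ σ | ∀ i, pair (m i) x = (r : ℝ)⁻¹}.Nonempty)
    (hτ : ∀ i, ∀ t ∈ τ, pair (m i) t + l i = 0) :
    (cone0 (σ ×ˢ ({0} : Set ℝ)) + cone0 (τ ×ˢ ({1} : Set ℝ)))
        ∩ {p : V n × ℝ | ∀ i, pairP (m i, l i - 1) p = 0}
      = cone0 (((r : ℝ) • {x ∈ σ | ∀ i, pair (m i) x = (r : ℝ)⁻¹} + τ) ×ˢ ({1} : Set ℝ)) := by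
  ext p
  constructor
  · rintro ⟨⟨_, ⟨a, -, ⟨x, _⟩, ⟨hx, rfl⟩, rfl⟩, _, ⟨b, hb, ⟨t, _⟩, ⟨ht, rfl⟩, rfl⟩, rfl⟩, hperp⟩
    have hab : ∀ i, a * pair (m i) x = b := fun i => by
      have := hperp i
      rw [pairP_smul_add_smul, hτ i t ht] at this
      linarith
    have har : a = r * b := by
      have := Finset.sum_congr rfl fun i (_ : i ∈ Finset.univ) => hab i
      rwa [← Finset.mul_sum, hσ x hx, mul_one, Finset.sum_const, Finset.card_univ,
        Fintype.card_fin, nsmul_eq_mul] at this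
    rcases hb.eq_or_lt with rfl | hb
    · obtain ⟨x₀, hx₀⟩ := hL
      refine ⟨0, le_rfl, ((r : ℝ) • x₀ + t, 1),
        ⟨Set.add_mem_add (Set.smul_mem_smul_set hx₀) ht, rfl⟩, ?_⟩
      simp [show a = 0 by simpa using har]
    · have hx' : ∀ i, pair (m i) x = (r : ℝ)⁻¹ := fun i => by
        have := hab i
        rw [har, mul_assoc, mul_comm, mul_assoc] at this
        exact eq_inv_of_mul_eq_one_left (mul_left_cancel₀ hb.ne' (this.trans (mul_one b).symm))
      refine ⟨b, hb.le, ((r : ℝ) • x + t, 1),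
        ⟨Set.add_mem_add (Set.smul_mem_smul_set ⟨hx, hx'⟩) ht, rfl⟩, ?_⟩
      ext <;> simp [har, smul_add, smul_smul, mul_comm]
  · rintro ⟨c, hc, ⟨y, s⟩, ⟨hy, rfl⟩, rfl⟩
    obtain ⟨_, ⟨x, ⟨hx, hxr⟩, rfl⟩, t, ht, rfl⟩ := hy
    have hp : c • ((r : ℝ) • x + t, (1 : ℝ)) = (c * r) • (x, (0 : ℝ)) + c • (t, 1) := by
      ext <;> simp [smul_add, smul_smul]
    refine ⟨hp ▸ Set.add_mem_add ⟨c * r, by positivity, (x, 0), ⟨hx, rfl⟩, rfl⟩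
      ⟨c, hc, (t, 1), ⟨ht, rfl⟩, rfl⟩, fun i => ?_⟩
    rw [hp, pairP_smul_add_smul, hxr i, hτ i t ht]
    field_simp
    ring

end Cone

theorem stmt14_general {n r : ℕ} (Δ : Set (V n)) (D : Fin r → Set (V n))
    (hΔrefl : IsReflexive Δ)
    (hDlat : ∀ i, IsLatticePolytope (D i))
    (hΔ : Δ = ∑ i, D i)
    (E : Finset (V n))
    (hE : (E : Set (V n)) = Set.extremePoints ℝ (polar Δ))
    (hnef : ∀ i, ∀ e ∈ E, supp (D i) e = 0 ∨ supp (D i) e = 1)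
    (Q : Set (V n))
    -- ρ = C(σ)×{0} + C(τ×{1}) a relevant cone of a good subdivision Σ̃' of Σ̃:
    -- σ ⊆ ∂Δ* a lattice polytope, τ ⊆ ∂∇^{ȟ'}, σ + τ contained in a face of
    -- Δ* + ∇^{ȟ'}, and σ̌(σ) ≠ ∅
    (σ τ : Set (V n))
    (hσbd : σ ⊆ frontier (polar Δ))
    (hσpoly : ∃ S : Finset (V n), (∀ x ∈ S, IsLatticePt x) ∧ σ = convexHull ℝ (S : Set (V n)))
    (hτbd : τ ⊆ frontier Q)
    (hrel : ∀ i, {x ∈ σ | supp (D i) x = 1}.Nonempty)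
    -- (mᵢ, lᵢ) ∈ M × ℤ defining φ̃ᵢ on ρ: φ̃ᵢ(x,0) = φᵢ(x) on C(σ), φ̃ᵢ(t,1) = 0 on τ
    (mi : Fin r → V n) (li : Fin r → ℝ)
    (hmlat : ∀ i, IsLatticePt (mi i))
    (hmi : ∀ i, ∀ x ∈ σ, pair (mi i) x = supp (D i) x)
    (hli : ∀ i, ∀ t ∈ τ, pair (mi i) t + li i = 0) :
    -- ρ ∩ V_ρ^⊥ = C((σ̌(σ) + τ) × {1}), where V_ρ = Span{(mᵢ, lᵢ - 1)}
    (cone0 (σ ×ˢ ({0} : Set ℝ)) + cone0 (τ ×ˢ ({1} : Set ℝ)))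
      ∩ {p : V n × ℝ | ∀ i, pairP (mi i, li i - 1) p = 0}
      = cone0 (((∑ i, {x ∈ σ | supp (D i) x = 1}) + τ) ×ˢ ({1} : Set ℝ)) := by
  rcases subsingleton_or_nontrivial (V n) with hV | hV
  · obtain rfl : σ = ∅ :=
      Set.subset_empty_iff.1 (frontier_eq_empty_of_subsingleton (polar Δ) ▸ hσbd)
    obtain rfl : τ = ∅ := Set.subset_empty_iff.1 (frontier_eq_empty_of_subsingleton Q ▸ hτbd)
    simp [cone0]
  subst hΔ
  obtain ⟨S, hSlat, rfl⟩ := hσpoly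
  have hr := hΔrefl.pos_of_sum
  have hvert : ∀ v ∈ S,
      (∀ i, pair (mi i) v = 0 ∨ pair (mi i) v = 1) ∧ ∑ i, pair (mi i) v = 1 := fun v hv => by
    have hvσ := subset_convexHull ℝ _ hv
    simp only [hmi _ v hvσ]
    exact supp_eq_zero_or_one_of_mem_frontier_polar hΔrefl hDlat hE hnef (hσbd hvσ) fun i =>
      hmi i v hvσ ▸ (hmlat i).exists_pair_eq_intCast (hSlat v hv)
  have hlevel : ∀ i, {x ∈ convexHull ℝ (S : Set (V n)) | supp (D i) x = 1}
      = {x ∈ convexHull ℝ (S : Set (V n)) | pair (mi i) x = 1} := fun i =>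
    Set.sep_ext_iff.2 fun x hx => by rw [hmi i x hx]
  have hL := nonempty_finsetSum Finset.univ hrel
  simp only [hlevel] at hL ⊢
  rw [sum_levelSets_eq_smul (fun v hv => (hvert v hv).1) (fun v hv => (hvert v hv).2) hr] at hL ⊢
  exact cone_inter_perp_eq hr
    (fun x hx => sum_pair_eq_one_of_mem_convexHull (fun v hv => (hvert v hv).2) hx)
    (Set.smul_set_nonempty.1 hL) hli

theorem stmt14 {n r : ℕ} (Δ : Set (V n)) (D : Fin r → Set (V n))
    (hΔrefl : IsReflexive Δ)
    (hDlat : ∀ i, IsLatticePolytope (D i))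
    (hΔ : Δ = ∑ i, D i)
    (E : Finset (V n))
    (hE : (E : Set (V n)) = Set.extremePoints ℝ (polar Δ))
    (hnef : ∀ i, ∀ e ∈ E, supp (D i) e = 0 ∨ supp (D i) e = 1)
    (Nb : Fin r → Set (V n))
    (hNb : ∀ i, Nb i = convexHull ℝ ({0} ∪ {e : V n | e ∈ E ∧ supp (D i) e = 1}))
    -- ȟ' convex positively homogeneous piecewise linear, with Newton polytope ∇^{ȟ'}
    (hk : V n → ℝ) (FF : Finset (V n)) (hFF : FF.Nonempty)
    (hpl : ∀ x, hk x = FF.sup' hFF fun f => -(pair x f))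
    (Q : Set (V n)) (hQ : Q = {v : V n | ∀ m, -(hk m) ≤ pair m v})
    -- ρ = C(σ)×{0} + C(τ×{1}) a relevant cone of a good subdivision Σ̃' of Σ̃:
    -- σ ⊆ ∂Δ* a lattice polytope, τ ⊆ ∂∇^{ȟ'}, σ + τ contained in a face of
    -- Δ* + ∇^{ȟ'}, and σ̌(σ) ≠ ∅
    (σ τ : Set (V n))
    (hσbd : σ ⊆ frontier (polar Δ))
    (hσpoly : ∃ S : Finset (V n), (∀ x ∈ S, IsLatticePt x) ∧ σ = convexHull ℝ (S : Set (V n)))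
    (hτbd : τ ⊆ frontier Q)
    (hτconv : Convex ℝ τ)
    (hfc : ∃ Fc : Set (V n), IsFaceOf Fc (polar Δ + Q) ∧ σ + τ ⊆ Fc)
    (hrel : ∀ i, {x ∈ σ | supp (D i) x = 1}.Nonempty)
    -- (mᵢ, lᵢ) ∈ M × ℤ defining φ̃ᵢ on ρ: φ̃ᵢ(x,0) = φᵢ(x) on C(σ), φ̃ᵢ(t,1) = 0 on τ
    (mi : Fin r → V n) (li : Fin r → ℝ)
    (hmlat : ∀ i, IsLatticePt (mi i)) (hllat : ∀ i, ∃ z : ℤ, li i = (z : ℝ))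
    (hmi : ∀ i, ∀ x ∈ σ, pair (mi i) x = supp (D i) x)
    (hli : ∀ i, ∀ t ∈ τ, pair (mi i) t + li i = 0) :
    -- ρ ∩ V_ρ^⊥ = C((σ̌(σ) + τ) × {1}), where V_ρ = Span{(mᵢ, lᵢ - 1)}
    (cone0 (σ ×ˢ ({0} : Set ℝ)) + cone0 (τ ×ˢ ({1} : Set ℝ)))
      ∩ {p : V n × ℝ | ∀ i, pairP (mi i, li i - 1) p = 0}
      = cone0 (((∑ i, {x ∈ σ | supp (D i) x = 1}) + τ) ×ˢ ({1} : Set ℝ)) :=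
  stmt14_general Δ D hΔrefl hDlat hΔ E hE hnef Q σ τ hσbd hσpoly hτbd hrel mi li hmlat hmi hli

end BB
end

section
/- With Δ̃ = {(m,l) | m ∈ Δ, l ≥ ȟ'(m)} ⊆ M_ℝ × ℝ, its normal fan Σ̃ ⊆ N_ℝ × ℝ consists exactly of: (i) cones C(σ*) × {0} for faces σ* of Δ*; (ii) cones C(σ*) × {0} + C(τ × {1}) for faces σ* of Δ* and τ of ∇^{ȟ'} with σ* + τ a face of Δ* + ∇^{ȟ'}; and (iii) cones C(τ × {1}) for faces τ of ∇^{ȟ'}. -/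
/-!
A proper face of `Δ̃` minimises a functional `(v, s)` with `s ≥ 0`. For `s = 0` it is a vertical
face `σ × [ȟ', ∞)` over a face `σ` of `Δ`, and its normal cone is `C(σ*) × {0}`. For `s = 1` it is
the graph of `ȟ'` over the set `G ⊆ Δ` where `⟨u, ·⟩ + ȟ'` is minimal; its normal cone is
`C(σ* × {0}) + C(τ × {1})`, where `σ*` and `τ` are the sets of `w ∈ Δ*`, `q ∈ ∇` with
`⟨m, w⟩ = -1`, resp. `⟨m, q⟩ = -ȟ'(m)`, for all `m ∈ G`; it is of type (iii) when `σ*` is empty.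
The heart of the computation is that `G_u ⊆ G_w` forces `w ∈ C(σ*) + τ`: if `c ≤ 0` is the
minimum of `⟨w, ·⟩ + ȟ'` on `Δ`, comparing support functions gives `w ∈ (-c) Δ* + ∇`, and both
summands are tight along `G_u`. A relative interior point of a face sees exactly that face, which
identifies `σ*` and `τ` with faces of `Δ*`, `∇` and `Δ* + ∇`; conversely, a cone of each type is
the normal cone of the face `G_u` for `u = w + q` with `w`, `q` relative interior points of the
given faces.
-/

open scoped Pointwise

namespace BB

/-- The normal cone `N_P(F)` of the (possibly unbounded) polyhedron
`P ⊆ M_ℝ × ℝ` along `F`. -/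
def normalConeP {n : ℕ} (P F : Set (V n × ℝ)) : Set (V n × ℝ) :=
  {y | ∀ f ∈ F, ∀ p ∈ P, pairP y f ≤ pairP y p}

section Pairing

variable {n : ℕ}

lemma pair_comm (m v : V n) : pair m v = pair v m := dotProduct_comm m v

@[simp] lemma pair_add_left_s15 (a b c : V n) : pair (a + b) c = pair a c + pair b c :=
  add_dotProduct a b c

@[simp] lemma pair_add_right_s15 (a b c : V n) : pair a (b + c) = pair a b + pair a c :=
  dotProduct_add a b c

@[simp] lemma pair_smul_left (t : ℝ) (a b : V n) : pair (t • a) b = t * pair a b :=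
  smul_dotProduct t a b

@[simp] lemma pair_smul_right_s15 (t : ℝ) (a b : V n) : pair a (t • b) = t * pair a b :=
  dotProduct_smul t a b

@[simp] lemma pair_neg_left (a b : V n) : pair (-a) b = -pair a b := neg_dotProduct a b

@[simp] lemma pair_sub_right (a b c : V n) : pair a (b - c) = pair a b - pair a c :=
  dotProduct_sub a b c

@[simp] lemma pair_zero_left (b : V n) : pair 0 b = 0 := zero_dotProduct b

@[simp] lemma pair_zero_right (a : V n) : pair a 0 = 0 := dotProduct_zero a

lemma pair_self_pos {w : V n} (hw : w ≠ 0) : 0 < pair w w := by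
  have := Matrix.dotProduct_self_star_pos_iff.mpr hw
  rwa [star_trivial] at this

def pairCLM (m : V n) : V n →L[ℝ] ℝ := ∑ i, m i • ContinuousLinearMap.proj i

@[simp] lemma coe_pairCLM (m : V n) : ⇑(pairCLM m) = pair m := by
  ext x
  simp [pairCLM, pair]

lemma continuous_pair (m : V n) : Continuous (pair m) := by
  simpa using (pairCLM m).continuous

lemma exists_pairCLM_eq (ℓ : V n →L[ℝ] ℝ) : ∃ m, pairCLM m = ℓ := by
  refine ⟨fun i => ℓ fun j => if i = j then 1 else 0, ContinuousLinearMap.ext fun x => ?_⟩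
  rw [coe_pairCLM, ← ℓ.coe_coe, LinearMap.pi_apply_eq_sum_univ (ℓ : V n →ₗ[ℝ] ℝ) x]
  simp [pair, mul_comm]

def pairPCLM (y : V n × ℝ) : V n × ℝ →L[ℝ] ℝ :=
  (pairCLM y.1).comp (ContinuousLinearMap.fst ℝ (V n) ℝ) +
    y.2 • (ContinuousLinearMap.snd ℝ (V n) ℝ : V n × ℝ →L[ℝ] ℝ)

@[simp] lemma coe_pairPCLM (y : V n × ℝ) : ⇑(pairPCLM y) = pairP y := by
  ext p
  simp [pairPCLM, pairP]

lemma exists_pairPCLM_eq (ℓ : V n × ℝ →L[ℝ] ℝ) : ∃ y, pairPCLM y = ℓ := by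
  obtain ⟨m, hm⟩ := exists_pairCLM_eq (ℓ.comp (ContinuousLinearMap.inl ℝ (V n) ℝ))
  refine ⟨(m, ℓ (0, 1)), ContinuousLinearMap.ext fun p => ?_⟩
  have hp : p = (p.1, 0) + p.2 • ((0 : V n), (1 : ℝ)) := by ext <;> simp
  have h1 : ℓ (p.1, 0) = pair m p.1 := by
    rw [← coe_pairCLM, hm]
    rfl
  conv_rhs => rw [hp, map_add, map_smul, h1]
  simp [pairP, mul_comm]

end Pairing

section Argmin

variable {E : Type*}

def argminSet (f : E → ℝ) (A : Set E) : Set E := {x ∈ A | ∀ y ∈ A, f x ≤ f y}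

lemma argminSet_subset (f : E → ℝ) (A : Set E) : argminSet f A ⊆ A := fun _ hx => hx.1

lemma argminSet_nonempty [TopologicalSpace E] {f : E → ℝ} {A : Set E} (hA : IsCompact A)
    (hne : A.Nonempty) (hf : Continuous f) : (argminSet f A).Nonempty := by
  obtain ⟨x, hx, hmin⟩ := hA.exists_isMinOn hne hf.continuousOn
  exact ⟨x, hx, fun y hy => hmin hy⟩

lemma argminSet_const_mul {f : E → ℝ} {c : ℝ} (hc : 0 < c) (A : Set E) :
    argminSet (fun x => c * f x) A = argminSet f A := by
  simp only [argminSet, mul_le_mul_iff_right₀ hc]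

lemma eq_of_mem_argminSet {f : E → ℝ} {A : Set E} {x y : E} (hx : x ∈ argminSet f A)
    (hy : y ∈ argminSet f A) : f x = f y :=
  le_antisymm (hx.2 y hy.1) (hy.2 x hx.1)

lemma convex_argminSet [AddCommMonoid E] [Module ℝ E] {f : E → ℝ} {A : Set E}
    (hf : ConvexOn ℝ A f) : Convex ℝ (argminSet f A) := by
  intro x hx y hy a b ha hb hab
  have h := hf.convex_le (f x) ⟨hx.1, le_rfl⟩ ⟨hy.1, hy.2 x hx.1⟩ ha hb hab
  exact ⟨h.1, fun z hz => h.2.trans (hx.2 z hz)⟩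

lemma isExposed_argminSet [TopologicalSpace E] [AddCommGroup E] [Module ℝ E]
    (ℓ : E →L[ℝ] ℝ) (A : Set E) : IsExposed ℝ A (argminSet ℓ A) :=
  fun _ => ⟨-ℓ, by ext; simp [argminSet]⟩

lemma exists_eq_argminSet_of_isExposed [TopologicalSpace E] [AddCommGroup E] [Module ℝ E]
    {A B : Set E} (h : IsExposed ℝ A B) (hB : B.Nonempty) :
    ∃ ℓ : E →L[ℝ] ℝ, B = argminSet ℓ A := by
  obtain ⟨ℓ, rfl⟩ := h hB
  exact ⟨-ℓ, by ext; simp [argminSet]⟩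

lemma isExposed_argminSet_pair {n : ℕ} (m : V n) (A : Set (V n)) :
    IsExposed ℝ A (argminSet (pair m) A) := by
  simpa using isExposed_argminSet (pairCLM m) A

lemma exists_eq_argminSet_pair_of_isExposed {n : ℕ} {A B : Set (V n)} (h : IsExposed ℝ A B)
    (hB : B.Nonempty) : ∃ m, B = argminSet (pair m) A := by
  obtain ⟨ℓ, rfl⟩ := exists_eq_argminSet_of_isExposed h hB
  obtain ⟨m, rfl⟩ := exists_pairCLM_eq ℓ
  exact ⟨m, by rw [coe_pairCLM]⟩

lemma mem_argminSet_of_add_mem [Add E] {f : E → ℝ} (hf : ∀ a b, f (a + b) = f a + f b)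
    {A B : Set E} {a b : E} (ha : a ∈ A) (hb : b ∈ B) (h : a + b ∈ argminSet f (A + B)) :
    a ∈ argminSet f A ∧ b ∈ argminSet f B := by
  refine ⟨⟨ha, fun a' ha' => ?_⟩, ⟨hb, fun b' hb' => ?_⟩⟩
  · have := h.2 _ (Set.add_mem_add ha' hb)
    rw [hf, hf] at this
    linarith
  · have := h.2 _ (Set.add_mem_add ha hb')
    rw [hf, hf] at this
    linarith

lemma argminSet_add [Add E] {f : E → ℝ} (hf : ∀ a b, f (a + b) = f a + f b) (A B : Set E) :
    argminSet f (A + B) = argminSet f A + argminSet f B := by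
  apply Set.Subset.antisymm
  · rintro _ ⟨⟨a, ha, b, hb, rfl⟩, hmin⟩
    obtain ⟨ha', hb'⟩ := mem_argminSet_of_add_mem hf ha hb ⟨Set.add_mem_add ha hb, hmin⟩
    exact Set.add_mem_add ha' hb'
  · rintro _ ⟨a, ha, b, hb, rfl⟩
    refine ⟨Set.add_mem_add ha.1 hb.1, ?_⟩
    rintro _ ⟨a', ha', b', hb', rfl⟩
    rw [hf, hf]
    exact add_le_add (ha.2 a' ha') (hb.2 b' hb')

end Argmin

section ConvexGeometry

open Filter Topology

variable {E : Type*} [NormedAddCommGroup E] [NormedSpace ℝ E]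

lemma exists_pos_smul_mem_of_mem_nhds {A : Set E} (hA : A ∈ 𝓝 0) (x : E) :
    ∃ t : ℝ, 0 < t ∧ t • x ∈ A := by
  have hc : Continuous fun t : ℝ => t • x := continuous_id.smul continuous_const
  have hlim : Tendsto (fun t : ℝ => t • x) (𝓝[>] 0) (𝓝 0) := by
    simpa using (hc.tendsto 0).mono_left nhdsWithin_le_nhds
  obtain ⟨t, ht, ht0⟩ := ((hlim.eventually hA).and self_mem_nhdsWithin).exists
  exact ⟨t, ht0, ht⟩

lemma exists_pos_add_smul_sub_mem {K : Set E} {x₀ y : E} (hx₀ : x₀ ∈ intrinsicInterior ℝ K)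
    (hy : y ∈ K) : ∃ t : ℝ, 0 < t ∧ x₀ + t • (x₀ - y) ∈ K := by
  obtain ⟨z, hz, rfl⟩ := hx₀
  let γ : ℝ → affineSpan ℝ K := fun t =>
    ⟨t • ((z : E) - y) + z,
      AffineSubspace.smul_vsub_vadd_mem _ t z.2 (subset_affineSpan ℝ K hy) z.2⟩
  have hγ : Continuous γ :=
    ((continuous_id.smul continuous_const).add continuous_const).subtype_mk _
  have hγ0 : γ 0 = z := Subtype.ext (by simp [γ])
  have hev : ∀ᶠ t in 𝓝[>] (0 : ℝ), γ t ∈ interior ((↑) ⁻¹' K : Set (affineSpan ℝ K)) :=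
    ((hγ.tendsto 0).eventually (isOpen_interior.mem_nhds (hγ0 ▸ hz))).filter_mono
      nhdsWithin_le_nhds
  obtain ⟨t, ht, ht0⟩ := (hev.and self_mem_nhdsWithin).exists
  exact ⟨t, ht0, by simpa [γ, add_comm] using interior_subset ht⟩

lemma subset_of_add_eq_add {A B C D : Set E} (hA : IsClosed A) (hAc : Convex ℝ A)
    (hB : IsCompact B) (hBne : B.Nonempty) (hBD : B ⊆ D) (h : A + B = C + D) : C ⊆ A := by
  intro c hc
  by_contra hcA
  obtain ⟨ℓ, u, hcu, hAu⟩ := geometric_hahn_banach_point_closed hAc hA hcA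
  obtain ⟨b₀, hb₀, hmin⟩ := argminSet_nonempty hB hBne ℓ.continuous
  obtain ⟨a, ha, b, hb, hab⟩ : c + b₀ ∈ A + B := h ▸ Set.add_mem_add hc (hBD hb₀)
  have := congrArg ℓ hab
  rw [map_add, map_add] at this
  linarith [hAu a ha, hmin b hb]

variable {n : ℕ}

lemma pair_eq_of_mem_intrinsicInterior {K : Set (V n)} {m x₀ y : V n} {c : ℝ}
    (hx₀ : x₀ ∈ intrinsicInterior ℝ K) (hlb : ∀ x ∈ K, c ≤ pair m x) (heq : pair m x₀ = c)
    (hy : y ∈ K) : pair m y = c := by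
  obtain ⟨t, ht, hmem⟩ := exists_pos_add_smul_sub_mem hx₀ hy
  have := hlb _ hmem
  simp only [pair_add_right_s15, pair_smul_right_s15, pair_sub_right, heq] at this
  exact le_antisymm (by nlinarith) (hlb y hy)

lemma eq_argminSet_of_add_eq {K L σ τ : Set (V n)} {m : V n} (hσK : σ ⊆ K) (hτL : τ ⊆ L)
    (hσ : IsCompact σ) (hσc : Convex ℝ σ) (hσne : σ.Nonempty)
    (hτ : IsCompact τ) (hτc : Convex ℝ τ) (hτne : τ.Nonempty)
    (h : σ + τ = argminSet (pair m) (K + L)) :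
    σ = argminSet (pair m) K ∧ τ = argminSet (pair m) L := by
  have hsub : σ ⊆ argminSet (pair m) K ∧ τ ⊆ argminSet (pair m) L := by
    obtain ⟨a₀, ha₀⟩ := hσne
    obtain ⟨b₀, hb₀⟩ := hτne
    refine ⟨fun a ha => ?_, fun b hb => ?_⟩
    · exact (mem_argminSet_of_add_mem (pair_add_right_s15 m) (hσK ha) (hτL hb₀)
        (h ▸ Set.add_mem_add ha hb₀)).1
    · exact (mem_argminSet_of_add_mem (pair_add_right_s15 m) (hσK ha₀) (hτL hb)
        (h ▸ Set.add_mem_add ha₀ hb)).2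
  rw [argminSet_add (pair_add_right_s15 m)] at h
  refine ⟨hsub.1.antisymm (subset_of_add_eq_add hσ.isClosed hσc hτ hτne hsub.2 h),
    hsub.2.antisymm (subset_of_add_eq_add hτ.isClosed hτc hσ hσne hsub.1 ?_)⟩
  rw [add_comm, h, add_comm]

lemma mem_add_of_forall_pair_le {A B : Set (V n)} (hA : IsCompact A) (hAc : Convex ℝ A)
    (hB : IsCompact B) (hBc : Convex ℝ B) {x : V n}
    (h : ∀ m, ∃ a ∈ A, ∃ b ∈ B, pair m a + pair m b ≤ pair m x) : x ∈ A + B := by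
  by_contra hx
  obtain ⟨ℓ, u, hxu, hu⟩ :=
    geometric_hahn_banach_point_closed (hAc.add hBc) (hA.add hB).isClosed hx
  obtain ⟨m, rfl⟩ := exists_pairCLM_eq ℓ
  obtain ⟨a, ha, b, hb, hle⟩ := h m
  have hab := hu _ (Set.add_mem_add ha hb)
  simp only [coe_pairCLM, pair_add_right_s15] at hab hxu
  linarith

lemma convex_halfSpace_pair (m : V n) (r : ℝ) : Convex ℝ {w | r ≤ pair m w} := by
  simpa using convex_halfSpace_ge (pairCLM m).toLinearMap.isLinear r

lemma convex_polar (A : Set (V n)) : Convex ℝ (polar A) := by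
  simpa only [polar, Set.ofPred_forall] using convex_iInter₂ fun m _ => convex_halfSpace_pair m (-1)

lemma zero_mem_polar (A : Set (V n)) : (0 : V n) ∈ polar A := fun m _ => by simp

lemma zero_mem_interior_polar {A : Set (V n)} (hA : IsCompact A) :
    (0 : V n) ∈ interior (polar A) := by
  have hc : Continuous fun z : V n × V n => z.2 ⬝ᵥ z.1 := continuous_snd.dotProduct continuous_fst
  have hev : ∀ᶠ w in 𝓝 (0 : V n), ∀ m ∈ A, -1 < pair m w :=
    hA.eventually_forall_of_forall_eventually fun m _ =>
      (hc.tendsto (0, m)).eventually (lt_mem_nhds (by simp))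
  exact mem_interior_iff_mem_nhds.mpr (hev.mono fun w hw m hm => (hw m hm).le)

lemma mem_of_forall_polar_le {A : Set (V n)} (hAc : Convex ℝ A) (hA : IsClosed A)
    (h0 : (0 : V n) ∈ A) {m : V n} (hm : ∀ w ∈ polar A, -1 ≤ pair m w) : m ∈ A := by
  by_contra hmA
  obtain ⟨ℓ, u, hAu, hu⟩ := geometric_hahn_banach_closed_point hAc hA hmA
  obtain ⟨v, rfl⟩ := exists_pairCLM_eq ℓ
  simp only [coe_pairCLM] at hAu hu
  have hu0 : 0 < u := by simpa using hAu 0 h0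
  have key : ∀ x, pair x ((-u⁻¹) • v) = -(pair v x / u) := fun x => by
    rw [pair_smul_right_s15, pair_comm]
    ring
  have hw : (-u⁻¹) • v ∈ polar A := fun a ha => by
    rw [key, neg_le_neg_iff]
    exact ((div_lt_one hu0).mpr (hAu a ha)).le
  have := hm _ hw
  rw [key, neg_le_neg_iff] at this
  exact absurd ((one_lt_div hu0).mpr hu) (not_lt.mpr this)

lemma exists_pair_neg_of_zero_mem_interior {A : Set (V n)} (hA : (0 : V n) ∈ interior A)
    {w : V n} (hw : w ≠ 0) : ∃ m ∈ A, pair m w < 0 := by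
  obtain ⟨t, ht, hmem⟩ := exists_pos_smul_mem_of_mem_nhds (mem_interior_iff_mem_nhds.mp hA) (-w)
  refine ⟨t • -w, hmem, ?_⟩
  simpa using mul_pos ht (pair_self_pos hw)

end ConvexGeometry

section ContactSet

variable {n : ℕ}

def contactSet (K : Set (V n)) (φ : V n → ℝ) (T : Set (V n)) : Set (V n) :=
  {w ∈ K | ∀ m ∈ T, pair m w = φ m}

lemma contactSet_eq_argminSet {K T : Set (V n)} {φ : V n → ℝ} {u m₀ : V n} {c : ℝ}
    (hφ : ∀ m ∈ T, φ m = pair m u + c) (hlb : ∀ m ∈ T, ∀ w ∈ K, φ m ≤ pair m w)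
    (hm₀ : m₀ ∈ intrinsicInterior ℝ T) (hatt : ∃ w ∈ K, pair m₀ w = φ m₀) :
    contactSet K φ T = argminSet (pair m₀) K := by
  have hm₀T := intrinsicInterior_subset hm₀
  obtain ⟨w₀, hw₀, hw₀m⟩ := hatt
  apply Set.Subset.antisymm
  · rintro w ⟨hw, hwT⟩
    exact ⟨hw, fun w' hw' => hwT m₀ hm₀T ▸ hlb m₀ hm₀T w' hw'⟩
  · rintro w ⟨hw, hmin⟩
    refine ⟨hw, fun m hm => ?_⟩
    -- `φ` is affine on `T`, so `⟨w, ·⟩ - φ ≥ 0` vanishes on `T` once it does at `m₀`.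
    have hlb' : ∀ m ∈ T, c ≤ pair (w - u) m := fun m hm => by
      rw [pair_comm, pair_sub_right]
      linarith [hlb m hm w hw, hφ m hm]
    have heq : pair (w - u) m₀ = c := by
      rw [pair_comm, pair_sub_right]
      linarith [hlb m₀ hm₀T w hw, hmin w₀ hw₀, hφ m₀ hm₀T]
    have := pair_eq_of_mem_intrinsicInterior hm₀ hlb' heq hm
    rw [pair_comm, pair_sub_right] at this
    linarith [hφ m hm]

lemma contactSet_eq_of_mem_intrinsicInterior {K T A : Set (V n)} {φ : V n → ℝ} {ms x₁ : V n}
    (hA : A = {w ∈ K | pair ms w = φ ms}) (hms : ms ∈ T) (hx₁ : x₁ ∈ intrinsicInterior ℝ A)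
    (hlb : ∀ m ∈ T, ∀ w ∈ K, φ m ≤ pair m w) (htight : ∀ m ∈ T, pair m x₁ = φ m) :
    contactSet K φ T = A := by
  have hAK : A ⊆ K := hA ▸ fun _ hw => hw.1
  apply Set.Subset.antisymm
  · rintro w ⟨hw, hwT⟩
    exact hA ▸ ⟨hw, hwT ms hms⟩
  · intro w hw
    exact ⟨hAK hw, fun m hm => pair_eq_of_mem_intrinsicInterior hx₁
      (fun x hx => hlb m hm x (hAK hx)) (htight m hm) hw⟩

end ContactSet

section Cones

variable {E : Type*} [AddCommMonoid E] [Module ℝ E]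

lemma zero_mem_cone0 {A : Set E} (h : A.Nonempty) : (0 : E) ∈ cone0 A :=
  let ⟨a, ha⟩ := h
  ⟨0, le_rfl, a, ha, (zero_smul ℝ a).symm⟩

lemma smul_mem_cone0 {A : Set E} {x : E} (hx : x ∈ cone0 A) {c : ℝ} (hc : 0 ≤ c) :
    c • x ∈ cone0 A := by
  obtain ⟨c₀, hc₀, a, ha, rfl⟩ := hx
  exact ⟨c * c₀, mul_nonneg hc hc₀, a, ha, smul_smul c c₀ a⟩

lemma cone0_empty : cone0 (∅ : Set E) = ∅ := by
  simp [cone0]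

lemma cone0_prod_zero (A : Set E) :
    cone0 (A ×ˢ ({0} : Set ℝ)) = cone0 A ×ˢ ({0} : Set ℝ) := by
  ext ⟨x, s⟩
  constructor
  · rintro ⟨c, hc, ⟨a, t⟩, ⟨ha, rfl⟩, h⟩
    simp only [Prod.smul_mk, smul_zero, Prod.mk.injEq] at h
    exact ⟨⟨c, hc, a, ha, h.1⟩, h.2⟩
  · rintro ⟨⟨c, hc, a, ha, rfl⟩, rfl⟩
    exact ⟨c, hc, (a, 0), ⟨ha, rfl⟩, by simp⟩

lemma mem_cone0_prod_one {A : Set E} {y : E × ℝ} :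
    y ∈ cone0 (A ×ˢ ({1} : Set ℝ)) ↔ 0 ≤ y.2 ∧ ∃ q ∈ A, y.1 = y.2 • q := by
  constructor
  · rintro ⟨c, hc, ⟨q, t⟩, ⟨hq, rfl⟩, rfl⟩
    exact ⟨by simpa using hc, q, hq, by simp⟩
  · rintro ⟨hc, q, hq, h⟩
    exact ⟨y.2, hc, (q, 1), ⟨hq, rfl⟩, by ext <;> simp [h]⟩

variable {n : ℕ}

@[simp] lemma pairP_add_left (y y' p : V n × ℝ) : pairP (y + y') p = pairP y p + pairP y' p := by
  simp only [pairP, Prod.fst_add, Prod.snd_add, pair_add_left_s15]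
  ring

@[simp] lemma pairP_smul_left (c : ℝ) (y p : V n × ℝ) : pairP (c • y) p = c * pairP y p := by
  simp only [pairP, Prod.smul_fst, Prod.smul_snd, pair_smul_left, smul_eq_mul]
  ring

lemma add_mem_normalConeP {A Fc : Set (V n × ℝ)} {y y' : V n × ℝ} (hy : y ∈ normalConeP A Fc)
    (hy' : y' ∈ normalConeP A Fc) : y + y' ∈ normalConeP A Fc := fun f hf p hp => by
  simpa only [pairP_add_left] using add_le_add (hy f hf p hp) (hy' f hf p hp)

lemma smul_mem_normalConeP {A Fc : Set (V n × ℝ)} {y : V n × ℝ} {c : ℝ} (hc : 0 ≤ c)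
    (hy : y ∈ normalConeP A Fc) : c • y ∈ normalConeP A Fc := fun f hf p hp => by
  simpa only [pairP_smul_left] using mul_le_mul_of_nonneg_left (hy f hf p hp) hc

end Cones

-- `hk`, `Q` and `Dt` below are `ȟ'`, `∇^{ȟ'}` and `Δ̃`.
structure LiftData (n : ℕ) where
  Δ : Set (V n)
  F : Finset (V n)
  hF : F.Nonempty
  convex_Δ : Convex ℝ Δ
  isCompact_Δ : IsCompact Δ
  zero_mem_interior_Δ : (0 : V n) ∈ interior Δ
  isCompact_polar : IsCompact (polar Δ)

namespace LiftData

variable {n : ℕ} (S : LiftData n)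

def hk (m : V n) : ℝ := S.F.sup' S.hF fun f => -pair m f

def Q : Set (V n) := {v | ∀ m, -S.hk m ≤ pair m v}

def Dt : Set (V n × ℝ) := {p | p.1 ∈ S.Δ ∧ S.hk p.1 ≤ p.2}

lemma zero_mem_Δ : (0 : V n) ∈ S.Δ := interior_subset S.zero_mem_interior_Δ

lemma exists_mem_Q_pair_eq (m : V n) : ∃ q ∈ S.Q, pair m q = -S.hk m := by
  obtain ⟨f, hf, hfm⟩ := Finset.exists_mem_eq_sup' S.hF fun f => -pair m f
  exact ⟨f, fun m' => neg_le.mp (Finset.le_sup' (fun f => -pair m' f) hf),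
    by rw [hk, hfm, neg_neg]⟩

lemma Q_eq_convexHull : S.Q = convexHull ℝ (S.F : Set (V n)) := by
  apply Set.Subset.antisymm
  · intro v hv
    by_contra hvF
    obtain ⟨ℓ, u, hvu, hFu⟩ := geometric_hahn_banach_point_closed (convex_convexHull ℝ _)
      (S.F.finite_toSet.isCompact_convexHull ℝ).isClosed hvF
    obtain ⟨m, rfl⟩ := exists_pairCLM_eq ℓ
    obtain ⟨f, hf, hfm⟩ := Finset.exists_mem_eq_sup' S.hF fun f => -pair m f
    have hf' := hFu f (subset_convexHull ℝ _ hf)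
    have hvm := hv m
    simp only [coe_pairCLM, hk, hfm] at hvu hf' hvm
    linarith
  · intro v hv m
    refine convexHull_min (fun f hf => ?_) (convex_halfSpace_pair m _) hv
    exact neg_le.mp (Finset.le_sup' (fun f => -pair m f) hf)

lemma isCompact_Q : IsCompact S.Q :=
  S.Q_eq_convexHull ▸ S.F.finite_toSet.isCompact_convexHull ℝ

lemma convex_Q : Convex ℝ S.Q := S.Q_eq_convexHull ▸ convex_convexHull ℝ _

lemma Q_nonempty : S.Q.Nonempty :=
  let ⟨q, hq, _⟩ := S.exists_mem_Q_pair_eq 0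
  ⟨q, hq⟩

lemma argminSet_pair_Q (m : V n) :
    argminSet (pair m) S.Q = {q ∈ S.Q | pair m q = -S.hk m} := by
  obtain ⟨q₀, hq₀, hq₀m⟩ := S.exists_mem_Q_pair_eq m
  ext q
  refine ⟨fun hq => ⟨hq.1, le_antisymm (hq₀m ▸ hq.2 q₀ hq₀) (hq.1 m)⟩,
    fun hq => ⟨hq.1, fun q' hq' => hq.2 ▸ hq' m⟩⟩

lemma hk_zero : S.hk 0 = 0 := by
  simp [hk]

lemma hk_smul {c : ℝ} (hc : 0 ≤ c) (m : V n) : S.hk (c • m) = c * S.hk m := by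
  simp only [hk, pair_smul_left]
  rw [Finset.apply_sup'_eq_sup'_comp S.hF (fun r => c * r) fun a b => mul_max_of_nonneg a b hc]
  exact Finset.sup'_congr S.hF rfl fun _ _ => by simp

lemma continuous_hk : Continuous S.hk :=
  Continuous.finset_sup'_apply S.hF fun _ _ => (continuous_id.dotProduct continuous_const).neg

lemma convexOn_pair_add_hk (u : V n) : ConvexOn ℝ S.Δ fun m => pair u m + S.hk m := by
  refine ⟨S.convex_Δ, fun x _ y _ a b ha hb hab => ?_⟩
  obtain ⟨q, hq, hqm⟩ := S.exists_mem_Q_pair_eq (a • x + b • y)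
  simp only [pair_add_left_s15, pair_add_right_s15, pair_smul_left, pair_smul_right_s15, smul_eq_mul] at hqm ⊢
  nlinarith [mul_le_mul_of_nonneg_left (hq x) ha, mul_le_mul_of_nonneg_left (hq y) hb]

def faceΔ (v : V n) : Set (V n) := argminSet (pair v) S.Δ

def faceHk (u : V n) : Set (V n) := argminSet (fun m => pair u m + S.hk m) S.Δ

-- For a face `T` of `Δ`, the faces `σ*` of `Δ*` and `τ` of `∇` of the statement.
def polarFace (T : Set (V n)) : Set (V n) := contactSet (polar S.Δ) (fun _ => -1) T

def newtonFace (T : Set (V n)) : Set (V n) := contactSet S.Q (fun m => -S.hk m) T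

lemma faceΔ_subset (v : V n) : S.faceΔ v ⊆ S.Δ := argminSet_subset _ _

lemma faceHk_subset (u : V n) : S.faceHk u ⊆ S.Δ := argminSet_subset _ _

lemma faceΔ_nonempty (v : V n) : (S.faceΔ v).Nonempty :=
  argminSet_nonempty S.isCompact_Δ ⟨0, S.zero_mem_Δ⟩ (continuous_pair v)

lemma faceHk_nonempty (u : V n) : (S.faceHk u).Nonempty :=
  argminSet_nonempty S.isCompact_Δ ⟨0, S.zero_mem_Δ⟩ ((continuous_pair u).add S.continuous_hk)

lemma convex_faceΔ (v : V n) : Convex ℝ (S.faceΔ v) :=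
  (isExposed_argminSet_pair v S.Δ).convex S.convex_Δ

lemma convex_faceHk (u : V n) : Convex ℝ (S.faceHk u) :=
  convex_argminSet (S.convexOn_pair_add_hk u)

lemma subset_faceΔ_iff {T : Set (V n)} (hT : T ⊆ S.Δ) (hTne : T.Nonempty) {w : V n} :
    T ⊆ S.faceΔ w ↔ w ∈ insert 0 (cone0 (S.polarFace T)) := by
  constructor
  · intro hsub
    refine or_iff_not_imp_left.mpr fun hw => ?_
    obtain ⟨m₁, hm₁⟩ := hTne
    obtain ⟨m, hm, hmw⟩ := exists_pair_neg_of_zero_mem_interior S.zero_mem_interior_Δ hw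
    obtain ⟨c, hcm⟩ : ∃ c, pair w m₁ = c := ⟨_, rfl⟩
    have hc : c < 0 := hcm ▸ ((hsub hm₁).2 m hm).trans_lt (by rwa [pair_comm])
    refine ⟨-c, by linarith, (-c)⁻¹ • w, ⟨fun m hm => ?_, fun m hm => ?_⟩, ?_⟩
    · rw [pair_smul_right_s15, le_inv_mul_iff₀ (by linarith), pair_comm]
      linarith [(hsub hm₁).2 m hm, hcm]
    · rw [pair_smul_right_s15, pair_comm, eq_of_mem_argminSet (hsub hm) (hsub hm₁), hcm, inv_neg,
        neg_mul, inv_mul_cancel₀ hc.ne]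
    · rw [smul_smul, mul_inv_cancel₀ (by linarith), one_smul]
  · rintro (rfl | ⟨t, ht, d, ⟨hdP, hdT⟩, rfl⟩) m hm
    · exact ⟨hT hm, fun m' _ => by simp⟩
    · refine ⟨hT hm, fun m' hm' => ?_⟩
      rw [pair_comm, pair_comm _ m', pair_smul_right_s15, pair_smul_right_s15, hdT m hm]
      exact mul_le_mul_of_nonneg_left (hdP m' hm') ht

lemma polarFace_nonempty {v : V n} (hv : v ≠ 0) : (S.polarFace (S.faceΔ v)).Nonempty := by
  obtain ⟨-, -, d, hd, -⟩ := ((S.subset_faceΔ_iff (S.faceΔ_subset v) (S.faceΔ_nonempty v)).mp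
    subset_rfl).resolve_left hv
  exact ⟨d, hd⟩

lemma polarFace_ne_polar {T : Set (V n)} (hT : T.Nonempty) : S.polarFace T ≠ polar S.Δ := by
  intro h
  obtain ⟨m, hm⟩ := hT
  have := (h ▸ zero_mem_polar S.Δ : (0 : V n) ∈ S.polarFace T).2 m hm
  simp at this

lemma polarFace_eq_argminSet {T : Set (V n)} (hT : T ⊆ S.Δ) {m₀ : V n}
    (hm₀ : m₀ ∈ intrinsicInterior ℝ T) (hne : (S.polarFace T).Nonempty) :
    S.polarFace T = argminSet (pair m₀) (polar S.Δ) := by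
  obtain ⟨w, hw, hwT⟩ := hne
  exact contactSet_eq_argminSet (u := 0) (c := -1) (fun m _ => by simp)
    (fun m hm w hw => hw m (hT hm)) hm₀ ⟨w, hw, hwT m₀ (intrinsicInterior_subset hm₀)⟩

lemma newtonFace_eq_argminSet {u m₀ : V n} (hm₀ : m₀ ∈ intrinsicInterior ℝ (S.faceHk u)) :
    S.newtonFace (S.faceHk u) = argminSet (pair m₀) S.Q := by
  have hm₀u := intrinsicInterior_subset hm₀
  refine contactSet_eq_argminSet (u := u) (c := -(pair u m₀ + S.hk m₀)) (fun m hm => ?_)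
    (fun m _ w hw => hw m) hm₀ (S.exists_mem_Q_pair_eq m₀)
  have := eq_of_mem_argminSet hm hm₀u
  rw [pair_comm] at this
  linarith

lemma newtonFace_nonempty (u : V n) : (S.newtonFace (S.faceHk u)).Nonempty := by
  obtain ⟨m₀, hm₀⟩ := (S.faceHk_nonempty u).intrinsicInterior (S.convex_faceHk u)
  rw [S.newtonFace_eq_argminSet hm₀]
  exact argminSet_nonempty S.isCompact_Q S.Q_nonempty (continuous_pair m₀)

lemma pair_neg_of_mem_argminSet_polar {m w : V n} (hm : m ≠ 0)
    (hw : w ∈ argminSet (pair m) (polar S.Δ)) : pair m w < 0 := by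
  obtain ⟨a, ha, hneg⟩ :=
    exists_pair_neg_of_zero_mem_interior (zero_mem_interior_polar S.isCompact_Δ) hm
  exact (hw.2 a ha).trans_lt (by rwa [pair_comm])

lemma smul_mem_Δ_of_mem_argminSet_polar {m w : V n} (hw : w ∈ argminSet (pair m) (polar S.Δ))
    (hneg : pair m w < 0) : (-pair m w)⁻¹ • m ∈ S.Δ := by
  refine mem_of_forall_polar_le S.convex_Δ S.isCompact_Δ.isClosed S.zero_mem_Δ fun w' hw' => ?_
  rw [pair_smul_left, le_inv_mul_iff₀ (neg_pos.mpr hneg)]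
  linarith [hw.2 w' hw']

lemma exists_smul_mem_Δ_of_argminSet_ne {m : V n}
    (h : argminSet (pair m) (polar S.Δ) ≠ polar S.Δ) :
    ∃ t : ℝ, 0 < t ∧ t • m ∈ S.Δ ∧
      argminSet (pair m) (polar S.Δ) = {w ∈ polar S.Δ | pair (t • m) w = -1} := by
  have hm : m ≠ 0 := by
    rintro rfl
    exact h (by ext; simp [argminSet])
  obtain ⟨w₁, hw₁⟩ := argminSet_nonempty S.isCompact_polar ⟨0, zero_mem_polar _⟩
    (continuous_pair m)
  have hneg := S.pair_neg_of_mem_argminSet_polar hm hw₁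
  refine ⟨(-pair m w₁)⁻¹, by simpa using hneg, S.smul_mem_Δ_of_mem_argminSet_polar hw₁ hneg, ?_⟩
  ext w
  simp only [pair_smul_left, inv_mul_eq_iff_eq_mul₀ (neg_ne_zero.mpr hneg.ne), mul_neg_one,
    neg_neg]
  exact ⟨fun hw => ⟨hw.1, eq_of_mem_argminSet hw hw₁⟩,
    fun hw => ⟨hw.1, fun w' hw' => hw.2 ▸ hw₁.2 w' hw'⟩⟩

lemma argminSet_pair_smul {c : ℝ} (hc : 0 < c) (m : V n) (A : Set (V n)) :
    argminSet (pair (c • m)) A = argminSet (pair m) A := by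
  have : pair (c • m) = fun x => c * pair m x := funext (pair_smul_left c m)
  rw [this, argminSet_const_mul hc A]

-- Support functions: if `-λ < 0` is the minimum of `⟨m, ·⟩` on `Δ*`, then `λ⁻¹ m ∈ Δ` by
-- bipolarity, and homogeneity of `⟨w, ·⟩ + ȟ'` gives `c λ ≤ ⟨w, m⟩ + ȟ'(m)`.
lemma mem_smul_polar_add_Q {w : V n} {c : ℝ}
    (hmin : ∀ m ∈ S.Δ, c ≤ pair w m + S.hk m) : w ∈ (-c) • polar S.Δ + S.Q := by
  refine mem_add_of_forall_pair_le (S.isCompact_polar.smul _) ((convex_polar _).smul _)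
    S.isCompact_Q S.convex_Q fun m => ?_
  obtain ⟨q, hq, hqm⟩ := S.exists_mem_Q_pair_eq m
  obtain ⟨a, ha⟩ := argminSet_nonempty S.isCompact_polar ⟨0, zero_mem_polar _⟩ (continuous_pair m)
  refine ⟨(-c) • a, Set.smul_mem_smul_set ha.1, q, hq, ?_⟩
  rw [pair_smul_right_s15, hqm, pair_comm m w]
  by_cases hm : m = 0
  · simp [hm, S.hk_zero]
  have hneg := S.pair_neg_of_mem_argminSet_polar hm ha
  have := hmin _ (S.smul_mem_Δ_of_mem_argminSet_polar ha hneg)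
  rw [pair_smul_right_s15, S.hk_smul (inv_nonneg.mpr (neg_nonneg.mpr hneg.le)), ← mul_add,
    le_inv_mul_iff₀ (neg_pos.mpr hneg)] at this
  linarith

lemma exists_add_of_faceHk_subset {u w : V n} (h : S.faceHk u ⊆ S.faceHk w) :
    ∃ x ∈ insert 0 (cone0 (S.polarFace (S.faceHk u))),
      ∃ q ∈ S.newtonFace (S.faceHk u), w = x + q := by
  obtain ⟨m₁, hm₁⟩ := S.faceHk_nonempty u
  obtain ⟨c, hc⟩ : ∃ c, pair w m₁ + S.hk m₁ = c := ⟨_, rfl⟩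
  have hmin : ∀ m ∈ S.Δ, c ≤ pair w m + S.hk m := hc ▸ (h hm₁).2
  have hc0 : c ≤ 0 := by simpa [S.hk_zero] using hmin 0 S.zero_mem_Δ
  obtain ⟨_, ⟨d, hd, rfl⟩, q, hq, hw⟩ := S.mem_smul_polar_add_Q hmin
  beta_reduce at hw
  have htight : ∀ m ∈ S.faceHk u, pair m q = -S.hk m ∧ -c * pair m d = c := by
    intro m hm
    have hval : pair w m + S.hk m = c := hc ▸ eq_of_mem_argminSet (h hm) (h hm₁)
    have hpw : pair m ((-c) • d) + pair m q = pair w m := by rw [← pair_add_right_s15, hw, pair_comm]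
    have hd1 := mul_le_mul_of_nonneg_left (hd m (S.faceHk_subset u hm)) (neg_nonneg.mpr hc0)
    rw [pair_smul_right_s15] at hpw
    constructor <;> linarith [hq m]
  refine ⟨(-c) • d, ?_, q, ⟨hq, fun m hm => (htight m hm).1⟩, hw.symm⟩
  rcases hc0.lt_or_eq with hc0 | rfl
  · refine Or.inr ⟨-c, by linarith, d, ⟨hd, fun m hm => ?_⟩, rfl⟩
    have := (htight m hm).2
    exact mul_left_cancel₀ (neg_ne_zero.mpr hc0.ne) (by linarith)
  · simp

def verticalFace (v : V n) : Set (V n × ℝ) := argminSet (pairP (v, 0)) S.Dt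

def lowerFace (u : V n) : Set (V n × ℝ) := argminSet (pairP (u, 1)) S.Dt

lemma isExposed_argminSet_pairP (y : V n × ℝ) : IsExposed ℝ S.Dt (argminSet (pairP y) S.Dt) := by
  simpa using isExposed_argminSet (pairPCLM y) S.Dt

lemma mem_verticalFace {v : V n} {p : V n × ℝ} :
    p ∈ S.verticalFace v ↔ p ∈ S.Dt ∧ p.1 ∈ S.faceΔ v := by
  simp only [verticalFace, faceΔ, argminSet, pairP, zero_mul, add_zero, Set.mem_ofPred_eq]
  exact ⟨fun ⟨hp, hmin⟩ => ⟨hp, hp.1, fun m hm => hmin (m, S.hk m) ⟨hm, le_rfl⟩⟩,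
    fun ⟨hp, _, hmin⟩ => ⟨hp, fun p' hp' => hmin p'.1 hp'.1⟩⟩

lemma mem_lowerFace {u : V n} {p : V n × ℝ} :
    p ∈ S.lowerFace u ↔ p.1 ∈ S.faceHk u ∧ p.2 = S.hk p.1 := by
  simp only [lowerFace, faceHk, argminSet, pairP, one_mul, Set.mem_ofPred_eq]
  constructor
  · rintro ⟨hp, hmin⟩
    have h2 : p.2 = S.hk p.1 :=
      le_antisymm (by simpa using hmin (p.1, S.hk p.1) ⟨hp.1, le_rfl⟩) hp.2
    exact ⟨⟨hp.1, fun m hm => h2 ▸ hmin (m, S.hk m) ⟨hm, le_rfl⟩⟩, h2⟩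
  · rintro ⟨⟨hp, hmin⟩, h2⟩
    refine ⟨⟨hp, h2.ge⟩, fun p' hp' => ?_⟩
    linarith [hmin p'.1 hp'.1, hp'.2]

lemma graph_mem_verticalFace {v m : V n} (hm : m ∈ S.faceΔ v) {l : ℝ} (hl : S.hk m ≤ l) :
    (m, l) ∈ S.verticalFace v :=
  S.mem_verticalFace.mpr ⟨⟨hm.1, hl⟩, hm⟩

lemma graph_mem_lowerFace {u m : V n} (hm : m ∈ S.faceHk u) : (m, S.hk m) ∈ S.lowerFace u :=
  S.mem_lowerFace.mpr ⟨hm, rfl⟩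

lemma verticalFace_ne_Dt {v : V n} (hv : v ≠ 0) : S.verticalFace v ≠ S.Dt := by
  intro h
  obtain ⟨m, hm, hmv⟩ := exists_pair_neg_of_zero_mem_interior S.zero_mem_interior_Δ hv
  have h0 : ((0 : V n), (0 : ℝ)) ∈ S.verticalFace v := h ▸ ⟨S.zero_mem_Δ, S.hk_zero.le⟩
  have := (S.mem_verticalFace.mp h0).2.2 m hm
  rw [pair_zero_right, pair_comm] at this
  linarith

lemma lowerFace_ne_Dt (u : V n) : S.lowerFace u ≠ S.Dt := by
  intro h
  have h0 : ((0 : V n), (1 : ℝ)) ∈ S.lowerFace u := h ▸ ⟨S.zero_mem_Δ, by simp [S.hk_zero]⟩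
  simpa [S.hk_zero] using (S.mem_lowerFace.mp h0).2

lemma exists_eq_verticalFace_or_lowerFace {Fc : Set (V n × ℝ)} (hFc : IsExposed ℝ S.Dt Fc)
    (hne : Fc.Nonempty) (hprop : Fc ≠ S.Dt) :
    (∃ v ≠ 0, Fc = S.verticalFace v) ∨ ∃ u, Fc = S.lowerFace u := by
  obtain ⟨ℓ, rfl⟩ := exists_eq_argminSet_of_isExposed hFc hne
  obtain ⟨⟨v, s⟩, rfl⟩ := exists_pairPCLM_eq ℓ
  rw [coe_pairPCLM] at hne hprop ⊢
  rcases lt_trichotomy s 0 with hs | rfl | hs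
  · obtain ⟨p, hp, hmin⟩ := hne
    have := hmin (p.1, p.2 + 1) ⟨hp.1, by linarith [hp.2]⟩
    simp only [pairP, mul_add] at this
    linarith
  · refine Or.inl ⟨v, fun hv => hprop ?_, rfl⟩
    ext p
    simp [argminSet, pairP, hv]
  · refine Or.inr ⟨s⁻¹ • v, ?_⟩
    rw [lowerFace, ← argminSet_const_mul hs (f := pairP (s⁻¹ • v, 1))]
    congr 1
    ext p
    simp only [pairP, pair_smul_left, one_mul]
    field_simp

lemma mk_zero_mem_normalConeP {Fc : Set (V n × ℝ)} {x : V n} (h : ∀ f ∈ Fc, f.1 ∈ S.faceΔ x) :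
    (x, 0) ∈ normalConeP S.Dt Fc := fun f hf p hp => by
  simpa [pairP] using (h f hf).2 p.1 hp.1

lemma mk_one_mem_normalConeP_lowerFace {u q : V n} (hq : q ∈ S.newtonFace (S.faceHk u)) :
    (q, 1) ∈ normalConeP S.Dt (S.lowerFace u) := fun f hf p hp => by
  obtain ⟨hf1, hf2⟩ := S.mem_lowerFace.mp hf
  simp only [pairP, one_mul, pair_comm q, hq.2 f.1 hf1, hf2]
  linarith [hq.1 p.1, hp.2]

lemma normalConeP_verticalFace (v : V n) :
    normalConeP S.Dt (S.verticalFace v) =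
      insert 0 (cone0 (S.polarFace (S.faceΔ v))) ×ˢ ({0} : Set ℝ) := by
  have hiff (w : V n) := S.subset_faceΔ_iff (S.faceΔ_subset v) (S.faceΔ_nonempty v) (w := w)
  ext y
  constructor
  · intro hy
    obtain ⟨m₁, hm₁⟩ := S.faceΔ_nonempty v
    have hup := hy _ (S.graph_mem_verticalFace hm₁ le_rfl) _
      (S.graph_mem_verticalFace hm₁ (le_add_of_nonneg_right zero_le_one)).1
    have hdown := hy _ (S.graph_mem_verticalFace hm₁ (le_add_of_nonneg_right zero_le_one)) _
      (S.graph_mem_verticalFace hm₁ le_rfl).1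
    simp only [pairP] at hup hdown
    have hy2 : y.2 = 0 := by linarith
    refine ⟨(hiff _).mp fun m hm => ⟨hm.1, fun m' hm' => ?_⟩, hy2⟩
    simpa [pairP, hy2] using hy _ (S.graph_mem_verticalFace hm le_rfl) (m', S.hk m') ⟨hm', le_rfl⟩
  · rintro ⟨hy1, hy2⟩
    rw [show y = (y.1, 0) from Prod.ext rfl hy2]
    exact S.mk_zero_mem_normalConeP fun f hf => (hiff _).mpr hy1 (S.mem_verticalFace.mp hf).2

lemma nonneg_and_subset_of_mem_normalConeP_lowerFace {u : V n} {y : V n × ℝ}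
    (hy : y ∈ normalConeP S.Dt (S.lowerFace u)) :
    0 ≤ y.2 ∧ S.faceHk u ⊆ argminSet (fun m => pair y.1 m + y.2 * S.hk m) S.Δ := by
  obtain ⟨m₁, hm₁⟩ := S.faceHk_nonempty u
  have hup := hy _ (S.graph_mem_lowerFace hm₁) (m₁, S.hk m₁ + 1) ⟨hm₁.1, by linarith⟩
  simp only [pairP] at hup
  exact ⟨by linarith, fun m hm => ⟨hm.1, fun m' hm' =>
    hy _ (S.graph_mem_lowerFace hm) (m', S.hk m') ⟨hm', le_rfl⟩⟩⟩

lemma normalConeP_lowerFace (u : V n) :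
    normalConeP S.Dt (S.lowerFace u) =
      insert 0 (cone0 (S.polarFace (S.faceHk u))) ×ˢ ({0} : Set ℝ) +
        cone0 (S.newtonFace (S.faceHk u) ×ˢ ({1} : Set ℝ)) := by
  have hiff (w : V n) := S.subset_faceΔ_iff (S.faceHk_subset u) (S.faceHk_nonempty u) (w := w)
  ext y
  constructor
  · intro hy
    obtain ⟨hy2, hsub⟩ := S.nonneg_and_subset_of_mem_normalConeP_lowerFace hy
    obtain ⟨q₀, hq₀⟩ := S.newtonFace_nonempty u
    rcases hy2.eq_or_lt with hy2 | hy2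
    · simp only [← hy2, zero_mul, add_zero] at hsub
      refine ⟨(y.1, 0), ⟨(hiff _).mp hsub, rfl⟩, (0, 0),
        mem_cone0_prod_one.mpr ⟨le_rfl, q₀, hq₀, by simp⟩, Prod.ext (by simp) (by simp [← hy2])⟩
    · have hscale : argminSet (fun m => pair y.1 m + y.2 * S.hk m) S.Δ =
          S.faceHk (y.2⁻¹ • y.1) := by
        rw [faceHk, ← argminSet_const_mul hy2
          (f := fun m => pair (y.2⁻¹ • y.1) m + S.hk m)]
        congr 1
        ext m
        rw [pair_smul_left]
        field_simp
      obtain ⟨x, hx, q, hq, hxq⟩ := S.exists_add_of_faceHk_subset (hscale ▸ hsub)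
      have hx' : y.2 • x ∈ insert 0 (cone0 (S.polarFace (S.faceHk u))) := by
        rcases hx with rfl | hx
        · exact Or.inl (smul_zero _)
        · exact Or.inr (smul_mem_cone0 hx hy2.le)
      refine ⟨(y.2 • x, 0), ⟨hx', rfl⟩, (y.2 • q, y.2),
        mem_cone0_prod_one.mpr ⟨hy2.le, q, hq, rfl⟩, Prod.ext ?_ (by simp)⟩
      rw [Prod.fst_add, ← smul_add, ← hxq, smul_smul, mul_inv_cancel₀ hy2.ne', one_smul]
  · rintro ⟨a, ⟨ha1, ha2⟩, b, hb, rfl⟩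
    refine add_mem_normalConeP ?_ ?_
    · rw [show a = (a.1, 0) from Prod.ext rfl ha2]
      exact S.mk_zero_mem_normalConeP fun f hf => (hiff _).mpr ha1 (S.mem_lowerFace.mp hf).1
    · obtain ⟨hb2, q, hq, hb1⟩ := mem_cone0_prod_one.mp hb
      rw [show b = b.2 • (q, 1) from Prod.ext (by simp [hb1]) (by simp)]
      exact smul_mem_normalConeP hb2 (S.mk_one_mem_normalConeP_lowerFace hq)

lemma normalConeP_verticalFace_of_nonempty {v : V n} (hD : (S.polarFace (S.faceΔ v)).Nonempty) :
    normalConeP S.Dt (S.verticalFace v) = cone0 (S.polarFace (S.faceΔ v) ×ˢ ({0} : Set ℝ)) := by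
  rw [S.normalConeP_verticalFace, Set.insert_eq_of_mem (zero_mem_cone0 hD), cone0_prod_zero]

lemma normalConeP_lowerFace_of_nonempty {u : V n} (hD : (S.polarFace (S.faceHk u)).Nonempty) :
    normalConeP S.Dt (S.lowerFace u) = cone0 (S.polarFace (S.faceHk u) ×ˢ ({0} : Set ℝ)) +
      cone0 (S.newtonFace (S.faceHk u) ×ˢ ({1} : Set ℝ)) := by
  rw [S.normalConeP_lowerFace, Set.insert_eq_of_mem (zero_mem_cone0 hD), cone0_prod_zero]

lemma normalConeP_lowerFace_of_empty {u : V n} (hD : S.polarFace (S.faceHk u) = ∅) :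
    normalConeP S.Dt (S.lowerFace u) = cone0 (S.newtonFace (S.faceHk u) ×ˢ ({1} : Set ℝ)) := by
  rw [S.normalConeP_lowerFace, hD, cone0_empty, insert_empty_eq, Set.singleton_prod_singleton,
    Prod.mk_zero_zero, Set.singleton_zero, zero_add]

lemma mem_faceHk_add_and_tight {ms w₁ q₁ : V n} {a : ℝ} (hms : ms ∈ S.Δ)
    (hw₁ : ∀ m ∈ S.Δ, a ≤ pair m w₁) (hq₁ : q₁ ∈ S.Q) (hw₁ms : pair ms w₁ = a)
    (hq₁ms : pair ms q₁ = -S.hk ms) :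
    ms ∈ S.faceHk (w₁ + q₁) ∧ ∀ m ∈ S.faceHk (w₁ + q₁), pair m w₁ = a ∧ pair m q₁ = -S.hk m := by
  have hval : ∀ m, pair (w₁ + q₁) m + S.hk m = pair m w₁ + (pair m q₁ + S.hk m) := fun m => by
    rw [pair_add_left_s15, pair_comm w₁, pair_comm q₁]
    ring
  have hms' : ms ∈ S.faceHk (w₁ + q₁) := ⟨hms, fun m hm => by
    simp only [hval, hw₁ms, hq₁ms]
    linarith [hw₁ m hm, hq₁ m]⟩
  refine ⟨hms', fun m hm => ?_⟩
  have := eq_of_mem_argminSet hm hms'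
  simp only [hval, hw₁ms, hq₁ms] at this
  constructor <;> linarith [hw₁ m hm.1, hq₁ m]

def normalFan : Set (Set (V n × ℝ)) :=
  {C | ∃ Fc, IsFaceOf Fc S.Dt ∧ Fc.Nonempty ∧ Fc ≠ S.Dt ∧ C = normalConeP S.Dt Fc}

def polarCones : Set (Set (V n × ℝ)) :=
  {C | ∃ σ : Set (V n), IsFaceOf σ (polar S.Δ) ∧ σ.Nonempty ∧ σ ≠ polar S.Δ ∧
    C = cone0 (σ ×ˢ ({0} : Set ℝ))}

def mixedCones : Set (Set (V n × ℝ)) :=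
  {C | ∃ σ τ : Set (V n), IsFaceOf σ (polar S.Δ) ∧ σ.Nonempty ∧ σ ≠ polar S.Δ ∧
    IsFaceOf τ S.Q ∧ τ.Nonempty ∧ IsFaceOf (σ + τ) (polar S.Δ + S.Q) ∧
    C = cone0 (σ ×ˢ ({0} : Set ℝ)) + cone0 (τ ×ˢ ({1} : Set ℝ))}

def newtonCones : Set (Set (V n × ℝ)) :=
  {C | ∃ τ : Set (V n), IsFaceOf τ S.Q ∧ τ.Nonempty ∧ C = cone0 (τ ×ˢ ({1} : Set ℝ))}

lemma normalConeP_verticalFace_mem_polarCones {v : V n} (hv : v ≠ 0) :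
    normalConeP S.Dt (S.verticalFace v) ∈ S.polarCones := by
  have hD := S.polarFace_nonempty hv
  obtain ⟨m₀, hm₀⟩ := (S.faceΔ_nonempty v).intrinsicInterior (S.convex_faceΔ v)
  refine ⟨_, ?_, hD, S.polarFace_ne_polar (S.faceΔ_nonempty v),
    S.normalConeP_verticalFace_of_nonempty hD⟩
  rw [S.polarFace_eq_argminSet (S.faceΔ_subset v) hm₀ hD]
  exact isExposed_argminSet_pair m₀ _

lemma normalConeP_lowerFace_mem_mixedCones {u : V n}
    (hD : (S.polarFace (S.faceHk u)).Nonempty) :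
    normalConeP S.Dt (S.lowerFace u) ∈ S.mixedCones := by
  obtain ⟨m₀, hm₀⟩ := (S.faceHk_nonempty u).intrinsicInterior (S.convex_faceHk u)
  have hσ := S.polarFace_eq_argminSet (S.faceHk_subset u) hm₀ hD
  have hτ := S.newtonFace_eq_argminSet hm₀
  refine ⟨_, _, ?_, hD, S.polarFace_ne_polar (S.faceHk_nonempty u), ?_, S.newtonFace_nonempty u,
    ?_, S.normalConeP_lowerFace_of_nonempty hD⟩
  · rw [hσ]
    exact isExposed_argminSet_pair m₀ _
  · rw [hτ]
    exact isExposed_argminSet_pair m₀ _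
  · rw [hσ, hτ, ← argminSet_add (pair_add_right_s15 m₀)]
    exact isExposed_argminSet_pair m₀ _

lemma normalConeP_lowerFace_mem_newtonCones {u : V n} (hD : S.polarFace (S.faceHk u) = ∅) :
    normalConeP S.Dt (S.lowerFace u) ∈ S.newtonCones := by
  obtain ⟨m₀, hm₀⟩ := (S.faceHk_nonempty u).intrinsicInterior (S.convex_faceHk u)
  refine ⟨_, ?_, S.newtonFace_nonempty u, S.normalConeP_lowerFace_of_empty hD⟩
  rw [S.newtonFace_eq_argminSet hm₀]
  exact isExposed_argminSet_pair m₀ _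

lemma normalFan_subset : S.normalFan ⊆ S.polarCones ∪ S.mixedCones ∪ S.newtonCones := by
  rintro _ ⟨Fc, hFc, hne, hprop, rfl⟩
  rcases S.exists_eq_verticalFace_or_lowerFace hFc hne hprop with ⟨v, hv, rfl⟩ | ⟨u, rfl⟩
  · exact Or.inl (Or.inl (S.normalConeP_verticalFace_mem_polarCones hv))
  · rcases (S.polarFace (S.faceHk u)).eq_empty_or_nonempty with hD | hD
    · exact Or.inr (S.normalConeP_lowerFace_mem_newtonCones hD)
    · exact Or.inl (Or.inr (S.normalConeP_lowerFace_mem_mixedCones hD))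

lemma polarCones_subset_normalFan : S.polarCones ⊆ S.normalFan := by
  rintro _ ⟨σ, hσ, hne, hprop, rfl⟩
  obtain ⟨m, rfl⟩ := exists_eq_argminSet_pair_of_isExposed hσ hne
  obtain ⟨t, -, hms, hσeq⟩ := S.exists_smul_mem_Δ_of_argminSet_ne hprop
  obtain ⟨w₁, hw₁⟩ := hne.intrinsicInterior (hσ.convex (convex_polar _))
  obtain ⟨hw₁P, hw₁ms⟩ := hσeq.subset (intrinsicInterior_subset hw₁)
  have hface : ∀ m ∈ S.faceΔ w₁, pair m w₁ = -1 := fun m hm =>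
    le_antisymm (by simpa only [pair_comm w₁, hw₁ms] using hm.2 _ hms) (hw₁P m hm.1)
  have hmsw₁ : t • m ∈ S.faceΔ w₁ :=
    ⟨hms, fun m' hm' => by simpa only [pair_comm w₁, hw₁ms] using hw₁P m' hm'⟩
  have hD : S.polarFace (S.faceΔ w₁) = argminSet (pair m) (polar S.Δ) :=
    contactSet_eq_of_mem_intrinsicInterior hσeq hmsw₁ hw₁ (fun m hm w hw => hw m hm.1) hface
  have hw₁0 : w₁ ≠ 0 := by
    rintro rfl
    simp at hw₁ms
  refine ⟨S.verticalFace w₁, S.isExposed_argminSet_pairP _,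
    ⟨_, S.graph_mem_verticalFace hmsw₁ le_rfl⟩,
    S.verticalFace_ne_Dt hw₁0, ?_⟩
  rw [S.normalConeP_verticalFace_of_nonempty (hD ▸ hne), hD]

lemma mixedCones_subset_normalFan : S.mixedCones ⊆ S.normalFan := by
  rintro _ ⟨σ, τ, hσ, hσne, hσprop, hτ, hτne, hsum, rfl⟩
  obtain ⟨m, hm⟩ := exists_eq_argminSet_pair_of_isExposed hsum (hσne.add hτne)
  obtain ⟨rfl, rfl⟩ := eq_argminSet_of_add_eq hσ.subset hτ.subset
    (hσ.isCompact S.isCompact_polar) (hσ.convex (convex_polar _)) hσne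
    (hτ.isCompact S.isCompact_Q) (hτ.convex S.convex_Q) hτne hm
  obtain ⟨t, ht, hms, hσeq⟩ := S.exists_smul_mem_Δ_of_argminSet_ne hσprop
  have hτeq : argminSet (pair m) S.Q = {q ∈ S.Q | pair (t • m) q = -S.hk (t • m)} := by
    rw [← argminSet_pair_smul ht, S.argminSet_pair_Q]
  obtain ⟨w₁, hw₁⟩ := hσne.intrinsicInterior (hσ.convex (convex_polar _))
  obtain ⟨q₁, hq₁⟩ := hτne.intrinsicInterior (hτ.convex S.convex_Q)
  obtain ⟨hw₁P, hw₁ms⟩ := hσeq.subset (intrinsicInterior_subset hw₁)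
  obtain ⟨hq₁Q, hq₁ms⟩ := hτeq.subset (intrinsicInterior_subset hq₁)
  obtain ⟨hmsu, htight⟩ := S.mem_faceHk_add_and_tight hms hw₁P hq₁Q hw₁ms hq₁ms
  have hD : S.polarFace (S.faceHk (w₁ + q₁)) = argminSet (pair m) (polar S.Δ) :=
    contactSet_eq_of_mem_intrinsicInterior hσeq hmsu hw₁ (fun m hm w hw => hw m hm.1)
      fun m hm => (htight m hm).1
  have hT : S.newtonFace (S.faceHk (w₁ + q₁)) = argminSet (pair m) S.Q :=
    contactSet_eq_of_mem_intrinsicInterior hτeq hmsu hq₁ (fun m _ w hw => hw m)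
      fun m hm => (htight m hm).2
  refine ⟨S.lowerFace _, S.isExposed_argminSet_pairP _, ⟨_, S.graph_mem_lowerFace hmsu⟩,
    S.lowerFace_ne_Dt _, ?_⟩
  rw [S.normalConeP_lowerFace_of_nonempty (hD ▸ hσne), hD, hT]

lemma newtonCones_subset_normalFan : S.newtonCones ⊆ S.normalFan := by
  rintro _ ⟨τ, hτ, hne, rfl⟩
  obtain ⟨m, rfl⟩ := exists_eq_argminSet_pair_of_isExposed hτ hne
  obtain ⟨t, ht, hms⟩ :=
    exists_pos_smul_mem_of_mem_nhds (mem_interior_iff_mem_nhds.mp S.zero_mem_interior_Δ) m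
  have hτeq : argminSet (pair m) S.Q = {q ∈ S.Q | pair (t • m) q = -S.hk (t • m)} := by
    rw [← argminSet_pair_smul ht, S.argminSet_pair_Q]
  obtain ⟨q₁, hq₁⟩ := hne.intrinsicInterior (hτ.convex S.convex_Q)
  obtain ⟨hq₁Q, hq₁ms⟩ := hτeq.subset (intrinsicInterior_subset hq₁)
  -- For `u = q₁` the minimum of `⟨u, ·⟩ + ȟ'` on `Δ` is `0`, attained at `0`, so `σ*` is empty.
  have hzero : ∀ m ∈ S.Δ, (0 : ℝ) ≤ pair m 0 := fun m _ => by simp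
  obtain ⟨hmsu, htight⟩ := S.mem_faceHk_add_and_tight hms hzero hq₁Q (by simp) hq₁ms
  obtain ⟨h0u, -⟩ :=
    S.mem_faceHk_add_and_tight S.zero_mem_Δ hzero hq₁Q (by simp) (by simp [S.hk_zero])
  have hD : S.polarFace (S.faceHk (0 + q₁)) = ∅ :=
    Set.eq_empty_of_forall_notMem fun w hw => by simpa using hw.2 0 h0u
  have hT : S.newtonFace (S.faceHk (0 + q₁)) = argminSet (pair m) S.Q :=
    contactSet_eq_of_mem_intrinsicInterior hτeq hmsu hq₁ (fun m _ w hw => hw m)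
      fun m hm => (htight m hm).2
  refine ⟨S.lowerFace _, S.isExposed_argminSet_pairP _, ⟨_, S.graph_mem_lowerFace hmsu⟩,
    S.lowerFace_ne_Dt _, ?_⟩
  rw [S.normalConeP_lowerFace_of_empty hD, hT]

lemma normalFan_eq : S.normalFan = S.polarCones ∪ S.mixedCones ∪ S.newtonCones :=
  S.normalFan_subset.antisymm <| Set.union_subset
    (Set.union_subset S.polarCones_subset_normalFan S.mixedCones_subset_normalFan)
    S.newtonCones_subset_normalFan

end LiftData

theorem stmt15_general {n : ℕ} (Δ : Set (V n))
    (hΔrefl : IsReflexive Δ)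
    -- ȟ' convex positively homogeneous piecewise linear
    (hk : V n → ℝ) (F : Finset (V n)) (hF : F.Nonempty)
    (hpl : ∀ x, hk x = F.sup' hF fun f => -(pair x f))
    -- Q = ∇^{ȟ'}, containing 0
    (Q : Set (V n)) (hQ : Q = {v : V n | ∀ m, -(hk m) ≤ pair m v})
    -- Δ̃ = {(m,l) | m ∈ Δ, l ≥ ȟ'(m)}
    (Δt : Set (V n × ℝ)) (hΔt : Δt = {p : V n × ℝ | p.1 ∈ Δ ∧ hk p.1 ≤ p.2}) :
    -- the normal fan Σ̃ of Δ̃ (the normal cones to its proper faces) consists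
    -- exactly of the three listed families of cones
    {C : Set (V n × ℝ) | ∃ Fc : Set (V n × ℝ), IsFaceOf Fc Δt ∧ Fc.Nonempty ∧ Fc ≠ Δt ∧
        C = normalConeP Δt Fc}
      = {C | ∃ σs : Set (V n), IsFaceOf σs (polar Δ) ∧ σs.Nonempty ∧ σs ≠ polar Δ ∧
            C = cone0 (σs ×ˢ ({0} : Set ℝ))}
        ∪ {C | ∃ σs τ : Set (V n), IsFaceOf σs (polar Δ) ∧ σs.Nonempty ∧ σs ≠ polar Δ ∧
            IsFaceOf τ Q ∧ τ.Nonempty ∧ IsFaceOf (σs + τ) (polar Δ + Q) ∧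
            C = cone0 (σs ×ˢ ({0} : Set ℝ)) + cone0 (τ ×ˢ ({1} : Set ℝ))}
        ∪ {C | ∃ τ : Set (V n), IsFaceOf τ Q ∧ τ.Nonempty ∧
            C = cone0 (τ ×ˢ ({1} : Set ℝ))} := by
  obtain ⟨⟨A, -, rfl⟩, h0, ⟨B, -, hB⟩⟩ := hΔrefl
  let S : LiftData n := ⟨convexHull ℝ A, F, hF, convex_convexHull ℝ _,
    A.finite_toSet.isCompact_convexHull ℝ, h0, hB ▸ B.finite_toSet.isCompact_convexHull ℝ⟩
  obtain rfl : hk = S.hk := funext hpl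
  subst hQ hΔt
  exact S.normalFan_eq

theorem stmt15 {n : ℕ} (Δ : Set (V n))
    (hΔrefl : IsReflexive Δ)
    -- ȟ' convex positively homogeneous piecewise linear
    (hk : V n → ℝ) (F : Finset (V n)) (hF : F.Nonempty)
    (hpl : ∀ x, hk x = F.sup' hF fun f => -(pair x f))
    -- Q = ∇^{ȟ'}, containing 0
    (Q : Set (V n)) (hQ : Q = {v : V n | ∀ m, -(hk m) ≤ pair m v})
    (h0Q : (0 : V n) ∈ Q)
    -- Δ̃ = {(m,l) | m ∈ Δ, l ≥ ȟ'(m)}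
    (Δt : Set (V n × ℝ)) (hΔt : Δt = {p : V n × ℝ | p.1 ∈ Δ ∧ hk p.1 ≤ p.2}) :
    -- the normal fan Σ̃ of Δ̃ (the normal cones to its proper faces) consists
    -- exactly of the three listed families of cones
    {C : Set (V n × ℝ) | ∃ Fc : Set (V n × ℝ), IsFaceOf Fc Δt ∧ Fc.Nonempty ∧ Fc ≠ Δt ∧
        C = normalConeP Δt Fc}
      = {C | ∃ σs : Set (V n), IsFaceOf σs (polar Δ) ∧ σs.Nonempty ∧ σs ≠ polar Δ ∧
            C = cone0 (σs ×ˢ ({0} : Set ℝ))}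
        ∪ {C | ∃ σs τ : Set (V n), IsFaceOf σs (polar Δ) ∧ σs.Nonempty ∧ σs ≠ polar Δ ∧
            IsFaceOf τ Q ∧ τ.Nonempty ∧ IsFaceOf (σs + τ) (polar Δ + Q) ∧
            C = cone0 (σs ×ˢ ({0} : Set ℝ)) + cone0 (τ ×ˢ ({1} : Set ℝ))}
        ∪ {C | ∃ τ : Set (V n), IsFaceOf τ Q ∧ τ.Nonempty ∧
            C = cone0 (τ ×ˢ ({1} : Set ℝ))} :=
  stmt15_general Δ hΔrefl hk F hF hpl Q hQ Δt hΔt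

end BB
end
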